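/- arXiv:1604.04234 — 6 statements merged into one kernel-verified Lean document; each statement's English description precedes it below -/
import Mathlib

section
/- Let μ₁, μ₂, μ₃ ∈ ℂ*. Set λᵢ = μᵢ² for i = 1,2,3 and λ₄ = (λ₁λ₂λ₃)⁻¹, and for each permutation {i,j,k} = {1,2,3} set tᵢ = μⱼμₖ + (μⱼμₖ)⁻¹. Then t₁² + t₂² + t₃² − t₁t₂t₃ = 4 + (1−λ₁)(1−λ₂)(1−λ₃)(1−λ₄). In particular, the quantity P(λ) := t₁² + t₂² + t₃² − t₁t₂t₃ equals 4 if and only if some λᵢ = 1. -/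
theorem fricke_cubic_eq_four_add_prod_one_sub {K : Type*} [Field K] {a b c : K}
    (ha : a ≠ 0) (hb : b ≠ 0) (hc : c ≠ 0) :
    (b * c + (b * c)⁻¹) ^ 2 + (a * c + (a * c)⁻¹) ^ 2 + (a * b + (a * b)⁻¹) ^ 2
        - (b * c + (b * c)⁻¹) * (a * c + (a * c)⁻¹) * (a * b + (a * b)⁻¹)
      = 4 + (1 - a ^ 2) * (1 - b ^ 2) * (1 - c ^ 2) * (1 - (a ^ 2 * b ^ 2 * c ^ 2)⁻¹) := by
  field_simp
  ring

theorem one_sub_mul_one_sub_mul_one_sub_mul_one_sub_eq_zero_iff {R : Type*} [CommRing R]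
    [NoZeroDivisors R] (a b c d : R) :
    (1 - a) * (1 - b) * (1 - c) * (1 - d) = 0 ↔ a = 1 ∨ b = 1 ∨ c = 1 ∨ d = 1 := by
  simp only [mul_eq_zero, sub_eq_zero, eq_comm (a := (1 : R)), or_assoc]

/-- The key trace identity of Section 3.1: for `λᵢ = μᵢ²` (`i = 1,2,3`),
`λ₄ = (λ₁λ₂λ₃)⁻¹` and `tᵢ = μⱼμₖ + (μⱼμₖ)⁻¹` for `{i,j,k} = {1,2,3}`, one has
`t₁² + t₂² + t₃² − t₁t₂t₃ = 4 + (1−λ₁)(1−λ₂)(1−λ₃)(1−λ₄)`; in particular this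
quantity equals `4` iff some `λᵢ = 1`. -/
theorem trace_identity (μ₁ μ₂ μ₃ : ℂ) (hμ₁ : μ₁ ≠ 0) (hμ₂ : μ₂ ≠ 0) (hμ₃ : μ₃ ≠ 0)
    (l₁ l₂ l₃ l₄ t₁ t₂ t₃ : ℂ)
    (hl₁ : l₁ = μ₁ ^ 2) (hl₂ : l₂ = μ₂ ^ 2) (hl₃ : l₃ = μ₃ ^ 2)
    (hl₄ : l₄ = (l₁ * l₂ * l₃)⁻¹)
    (ht₁ : t₁ = μ₂ * μ₃ + (μ₂ * μ₃)⁻¹)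
    (ht₂ : t₂ = μ₁ * μ₃ + (μ₁ * μ₃)⁻¹)
    (ht₃ : t₃ = μ₁ * μ₂ + (μ₁ * μ₂)⁻¹) :
    t₁ ^ 2 + t₂ ^ 2 + t₃ ^ 2 - t₁ * t₂ * t₃
      = 4 + (1 - l₁) * (1 - l₂) * (1 - l₃) * (1 - l₄) ∧
    (t₁ ^ 2 + t₂ ^ 2 + t₃ ^ 2 - t₁ * t₂ * t₃ = 4 ↔
      (l₁ = 1 ∨ l₂ = 1 ∨ l₃ = 1 ∨ l₄ = 1)) := by
  subst hl₁ hl₂ hl₃ hl₄ ht₁ ht₂ ht₃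
  have key := fricke_cubic_eq_four_add_prod_one_sub hμ₁ hμ₂ hμ₃
  refine ⟨key, ?_⟩
  rw [key, add_eq_left, one_sub_mul_one_sub_mul_one_sub_mul_one_sub_eq_zero_iff]
end

section
/- Let x ∈ ℂ* and set t = x + x⁻¹. Let μ₁ = (1+√5)/2 and μ₂ = (√5−1)/2. Then t² = μ₁² if and only if x² is a primitive 5th root of unity with positive real part, and t² = μ₂² if and only if x² is a primitive 5th root of unity with negative real part. -/
/-!
Put `y = x²` and `w = y + y⁻¹`, so that `t² = w + 2`. Since `μ₁ = φ` and `μ₂ = -ψ` satisfy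
`φ² = φ + 1` and `ψ² = ψ + 1`, the two conditions read `w = -ψ` and `w = -φ`, the two roots of
`r² + r - 1`. The identity `y² (w² + w - 1) = y⁴ + y³ + y² + y + 1` shows that `w` is one of these
roots exactly when `y` has order `5`; such a `y` lies on the unit circle, so `w = 2 Re y`, and the
sign of `Re y` tells the two roots apart.
-/

open Complex
open scoped goldenRatio

section Field

variable {K : Type*} [Field K]

lemma sq_mul_add_inv_quadratic {y : K} (hy : y ≠ 0) :
    y ^ 2 * ((y + y⁻¹) ^ 2 + (y + y⁻¹) - 1) = y ^ 4 + y ^ 3 + y ^ 2 + y + 1 := by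
  field_simp
  ring

lemma orderOf_eq_five_iff [CharZero K] {y : K} :
    orderOf y = 5 ↔ y ^ 4 + y ^ 3 + y ^ 2 + y + 1 = 0 := by
  have : Fact (Nat.Prime 5) := ⟨by norm_num⟩
  have hfac : y ^ 5 - 1 = (y - 1) * (y ^ 4 + y ^ 3 + y ^ 2 + y + 1) := by ring
  rw [orderOf_eq_prime_iff, ← sub_eq_zero (a := y ^ 5), hfac, mul_eq_zero, sub_eq_zero]
  constructor
  · rintro ⟨h | h, hne⟩
    exacts [absurd h hne, h]
  · refine fun h => ⟨Or.inr h, ?_⟩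
    rintro rfl
    norm_num at h

lemma orderOf_eq_five_iff_add_inv [CharZero K] {y : K} (hy : y ≠ 0) :
    orderOf y = 5 ↔ (y + y⁻¹) ^ 2 + (y + y⁻¹) - 1 = 0 := by
  rw [orderOf_eq_five_iff, ← sq_mul_add_inv_quadratic hy, mul_eq_zero,
    or_iff_right (pow_ne_zero 2 hy)]

end Field

lemma sq_add_self_sub_one_eq_zero_iff {r : ℝ} : r ^ 2 + r - 1 = 0 ↔ r = -ψ ∨ r = -φ := by
  have hfac : r ^ 2 + r - 1 = (r - -ψ) * (r - -φ) := by
    linear_combination (-r) * Real.goldenRatio_add_goldenConj - Real.goldenConj_mul_goldenRatio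
  rw [hfac, mul_eq_zero, sub_eq_zero, sub_eq_zero]

lemma Complex.add_inv_eq_two_re {y : ℂ} (hy : ‖y‖ = 1) : y + y⁻¹ = (2 * y.re : ℝ) := by
  rw [inv_eq_conj hy, add_conj]

lemma Complex.norm_eq_one_of_orderOf_eq_five {y : ℂ} (h : orderOf y = 5) : ‖y‖ = 1 :=
  norm_eq_one_of_pow_eq_one (h ▸ pow_orderOf_eq_one y) (by norm_num)

lemma Complex.two_re_eq_of_orderOf_eq_five {y : ℂ} (h : orderOf y = 5) :
    2 * y.re = -ψ ∨ 2 * y.re = -φ := by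
  have hnorm := norm_eq_one_of_orderOf_eq_five h
  have hy : y ≠ 0 := norm_ne_zero_iff.mp (hnorm ▸ one_ne_zero)
  rw [orderOf_eq_five_iff_add_inv hy, add_inv_eq_two_re hnorm] at h
  exact sq_add_self_sub_one_eq_zero_iff.mp (by exact_mod_cast h)

lemma Complex.add_inv_eq_ofReal_iff {y : ℂ} (hy : y ≠ 0) {r : ℝ} (hr : r ^ 2 + r - 1 = 0) :
    y + y⁻¹ = r ↔ orderOf y = 5 ∧ 2 * y.re = r := by
  constructor
  · intro h
    have hord : orderOf y = 5 := by
      rw [orderOf_eq_five_iff_add_inv hy, h]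
      exact_mod_cast hr
    rw [add_inv_eq_two_re (norm_eq_one_of_orderOf_eq_five hord)] at h
    exact ⟨hord, by exact_mod_cast h⟩
  · rintro ⟨hord, hre⟩
    rw [add_inv_eq_two_re (norm_eq_one_of_orderOf_eq_five hord), hre]

lemma Complex.add_inv_eq_neg_goldenConj_iff {y : ℂ} (hy : y ≠ 0) :
    y + y⁻¹ = (-ψ : ℝ) ↔ orderOf y = 5 ∧ 0 < y.re := by
  rw [add_inv_eq_ofReal_iff hy (sq_add_self_sub_one_eq_zero_iff.mpr (.inl rfl))]
  refine and_congr_right fun hord => ⟨fun h => ?_, fun h => ?_⟩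
  · linarith [Real.goldenConj_neg]
  · exact (two_re_eq_of_orderOf_eq_five hord).resolve_right
      fun h' => by linarith [Real.goldenRatio_pos]

lemma Complex.add_inv_eq_neg_goldenRatio_iff {y : ℂ} (hy : y ≠ 0) :
    y + y⁻¹ = (-φ : ℝ) ↔ orderOf y = 5 ∧ y.re < 0 := by
  rw [add_inv_eq_ofReal_iff hy (sq_add_self_sub_one_eq_zero_iff.mpr (.inr rfl))]
  refine and_congr_right fun hord => ⟨fun h => ?_, fun h => ?_⟩
  · linarith [Real.goldenRatio_pos]
  · exact (two_re_eq_of_orderOf_eq_five hord).resolve_left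
      fun h' => by linarith [Real.goldenConj_neg]

/-- Lemma 3.3 (last two items): for `x ∈ ℂ*`, `t = x + x⁻¹`, `μ₁ = (1+√5)/2` and
`μ₂ = (√5−1)/2`, one has `t² = μ₁²` iff `x²` is a primitive 5th root of unity with
positive real part, and `t² = μ₂²` iff `x²` is a primitive 5th root of unity with
negative real part. -/
theorem trace_vs_order_golden (x : ℂ) (hx : x ≠ 0) (t : ℂ) (ht : t = x + x⁻¹)
    (μ₁ μ₂ : ℂ)
    (hμ₁ : μ₁ = (1 + (Real.sqrt 5 : ℂ)) / 2)
    (hμ₂ : μ₂ = ((Real.sqrt 5 : ℂ) - 1) / 2) :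
    (t ^ 2 = μ₁ ^ 2 ↔ orderOf (x ^ 2) = 5 ∧ 0 < (x ^ 2).re) ∧
    (t ^ 2 = μ₂ ^ 2 ↔ orderOf (x ^ 2) = 5 ∧ (x ^ 2).re < 0) := by
  have ht2 : t ^ 2 = x ^ 2 + (x ^ 2)⁻¹ + 2 := by
    rw [ht]
    field_simp
    ring
  have h5 : (Real.sqrt 5 : ℂ) ^ 2 = 5 := by
    exact_mod_cast Real.sq_sqrt (by norm_num : (0 : ℝ) ≤ 5)
  have hμ₁2 : μ₁ ^ 2 = (-ψ : ℝ) + 2 := by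
    rw [hμ₁]
    push_cast
    linear_combination h5 / 4
  have hμ₂2 : μ₂ ^ 2 = (-φ : ℝ) + 2 := by
    rw [hμ₂]
    push_cast
    linear_combination h5 / 4
  rw [ht2, hμ₁2, hμ₂2, add_left_inj, add_left_inj]
  exact ⟨add_inv_eq_neg_goldenConj_iff (pow_ne_zero 2 hx),
    add_inv_eq_neg_goldenRatio_iff (pow_ne_zero 2 hx)⟩
end

section
/- Let n ≥ 4 and let a₁, a₂, a₃ ∈ ℂ* ∖ {1} with a₁a₂a₃ = 1. Set λ = (1,…,1,a₁,a₂,a₃) ∈ (ℂ*)ⁿ (so λ_{n−2} = a₁, λ_{n−1} = a₂, λₙ = a₃ and all other entries equal 1), and let v⁰ ∈ ℂ^{n−1} be the vector with v⁰_{n−1} = −a₂ and all other coordinates 0. Then the class [v⁰] is fixed by every element of G_λ, and every v ∈ ℂ^{n−1} with v ∉ ℂ·δ_λ and [v] ≠ [v⁰] has infinite G_λ-orbit. In other words, the action has exactly one finite orbit, which is a fixed point. -/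
noncomputable section

namespace BraidAff

/-- The paper's formula (§2.2) for the action of the pure braid generator `σ_{i,j}²`
on translation parts, written with 0-based `ℕ` indices (the paper uses 1-based
indices `1 ≤ i < j ≤ n−1`; here everything is shifted down by one, which leaves the
shape of the formulas unchanged). -/
def braidL (lam τ : ℕ → ℂ) (i j : ℕ) : ℕ → ℂ := fun ν =>
  if ν = i then
    lam j * τ i + (1 - lam i) * (∏ k ∈ Finset.Icc i j, lam k) * τ j
      + (1 - lam i) * (1 - lam j) *
        ∑ k ∈ Finset.Icc i j, (∏ l ∈ Finset.Ico i k, lam l) * τ k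
  else if ν = j then
    lam i * τ j + (1 - lam j) * (∏ k ∈ Finset.Ico (i + 1) j, (lam k)⁻¹) * τ i
      - (1 - lam i) * (1 - lam j) *
        ∑ k ∈ Finset.Ico (i + 1) j, (∏ l ∈ Finset.Ico k j, (lam l)⁻¹) * τ k
  else τ ν

/-- Extension of a finitely indexed vector to `ℕ` (by zero; only in-range indices
are ever used in the formulas). -/
def extv {m : ℕ} (f : Fin m → ℂ) : ℕ → ℂ := fun k => if h : k < m then f ⟨k, h⟩ else 0

/-- The linear map `L_{i,j}` on `ℂ^{n−1}`. -/
def braidLV {n : ℕ} (lam : Fin n → ℂ) (i j : Fin (n - 1)) (τ : Fin (n - 1) → ℂ) :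
    Fin (n - 1) → ℂ :=
  fun ν => braidL (extv lam) (extv τ) i.val j.val ν.val

/-- The vector `δ_λ = (1 − λ₁, …, 1 − λ_{n−1})`. -/
def deltaVec {n : ℕ} (lam : Fin n → ℂ) : Fin (n - 1) → ℂ :=
  fun ν => 1 - extv lam ν.val

/-- The group `G_λ` generated by the maps `L_{i,j}` (for `i < j` in `Fin (n−1)`),
inside the group of linear automorphisms of `ℂ^{n−1}`. -/
def Glam {n : ℕ} (lam : Fin n → ℂ) :
    Subgroup ((Fin (n - 1) → ℂ) ≃ₗ[ℂ] (Fin (n - 1) → ℂ)) :=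
  Subgroup.closure {g | ∃ i j : Fin (n - 1), i < j ∧ ∀ τ, g τ = braidLV lam i j τ}

/-- The equivalence class `[v]` of a translation part `v`:
`w ∼ v` iff `w = a • v + b • δ_λ` with `a ≠ 0`. -/
def affClass {m : ℕ} (δ v : Fin m → ℂ) : Set (Fin m → ℂ) :=
  {w | ∃ a b : ℂ, a ≠ 0 ∧ w = a • v + b • δ}

/-- The `G_λ`-orbit of the class `[v]`, as a set of equivalence classes. -/
def classOrbit {n : ℕ} (lam : Fin n → ℂ) (v : Fin (n - 1) → ℂ) :
    Set (Set (Fin (n - 1) → ℂ)) :=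
  {S | ∃ g ∈ Glam lam, S = affClass (deltaVec lam) (g v)}

end BraidAff

/-!
Write `p, q` for the (0-based) positions of `a₁, a₂`, the last two coordinates of `ℂ^{n-1}`.
For `i < p` we have `λᵢ = 1`, so `L_{i,j}` only rescales `τᵢ` and adds a multiple of `τᵢ` to
`τⱼ`; it fixes every vector with `τᵢ = 0`, in particular `δ_λ` and `v⁰`. The remaining generator
`L_{p,q}` acts on the last two coordinates by a `2 × 2` matrix fixing `δ_λ` and sending `v⁰` to
`a₁a₂ (v⁰ - δ_λ)`, so all of `G_λ` fixes `δ_λ` and the class `[v⁰]`.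

Conversely `v⁰` and `δ_λ` span the last two coordinates, so any `v` outside `ℂ δ_λ` with
`[v] ≠ [v⁰]` has `vᵢ ≠ 0` for some `i < p`. The commutator of `L_{i,p}` and `L_{p,q}` is the
transvection `x ↦ x + xᵢ w` with `w = (1 - a₁)(1 - a₂)/(a₁a₂) (e_q - a₁ e_p)`, which is independent
of `δ_λ` because `a₁a₂ ≠ 1`; its powers therefore move `[v]` through infinitely many classes.
-/

namespace BraidAff

section PairMap

variable {R ι : Type*} [CommRing R] [DecidableEq ι]

def pairMap (i j : ι) (M : Matrix (Fin 2) (Fin 2) R) : (ι → R) →ₗ[R] (ι → R) where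
  toFun x ν := if ν = i then M 0 0 * x i + M 0 1 * x j
    else if ν = j then M 1 0 * x i + M 1 1 * x j else x ν
  map_add' x y := by ext ν; simp only [Pi.add_apply]; split_ifs <;> ring
  map_smul' c x := by
    ext ν; simp only [Pi.smul_apply, smul_eq_mul, RingHom.id_apply]; split_ifs <;> ring

lemma pairMap_apply (i j : ι) (M : Matrix (Fin 2) (Fin 2) R) (x : ι → R) (ν : ι) :
    pairMap i j M x ν = if ν = i then M 0 0 * x i + M 0 1 * x j
      else if ν = j then M 1 0 * x i + M 1 1 * x j else x ν :=
  rfl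

@[simp] lemma pairMap_apply_left (i j : ι) (a b c d : R) (x : ι → R) :
    pairMap i j !![a, b; c, d] x i = a * x i + b * x j :=
  if_pos rfl

@[simp] lemma pairMap_apply_right {i j : ι} (hij : i ≠ j) (a b c d : R) (x : ι → R) :
    pairMap i j !![a, b; c, d] x j = c * x i + d * x j := by
  rw [pairMap_apply, if_neg hij.symm, if_pos rfl]
  rfl

@[simp] lemma pairMap_apply_of_ne {i j ν : ι} (hi : ν ≠ i) (hj : ν ≠ j)
    (M : Matrix (Fin 2) (Fin 2) R) (x : ι → R) : pairMap i j M x ν = x ν := by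
  rw [pairMap_apply, if_neg hi, if_neg hj]

lemma pairMap_one (i j : ι) : pairMap i j (1 : Matrix (Fin 2) (Fin 2) R) = LinearMap.id := by
  ext x ν
  rw [pairMap_apply]
  split_ifs <;> simp_all

lemma pairMap_mul {i j : ι} (hij : i ≠ j) (M N : Matrix (Fin 2) (Fin 2) R) :
    pairMap i j (M * N) = pairMap i j M ∘ₗ pairMap i j N := by
  ext x ν
  simp only [pairMap_apply, LinearMap.comp_apply, Matrix.mul_apply, Fin.sum_univ_two,
    if_neg hij.symm]
  split_ifs <;> ring

def pairEquiv {i j : ι} (hij : i ≠ j) (M : Matrix (Fin 2) (Fin 2) R) (hM : IsUnit M.det) :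
    (ι → R) ≃ₗ[R] (ι → R) :=
  LinearEquiv.ofLinearMap (f := pairMap i j M) (g := pairMap i j M⁻¹)
    (by rw [← pairMap_mul hij, Matrix.mul_nonsing_inv _ hM, pairMap_one])
    (by rw [← pairMap_mul hij, Matrix.nonsing_inv_mul _ hM, pairMap_one])

end PairMap

section Stabilizer

variable {K V : Type*} [Field K] [AddCommGroup V] [Module K V]

def classStabilizer (δ v : V) : Subgroup (V ≃ₗ[K] V) where
  carrier := {g | g δ = δ ∧ ∃ a b : K, a ≠ 0 ∧ g v = a • v + b • δ}
  one_mem' := ⟨rfl, 1, 0, one_ne_zero, by simp⟩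
  mul_mem' := by
    rintro g h ⟨hgδ, a, b, ha, hgv⟩ ⟨hhδ, c, d, hc, hhv⟩
    refine ⟨by simp [hhδ, hgδ], c * a, c * b + d, mul_ne_zero hc ha, ?_⟩
    rw [LinearEquiv.mul_apply, hhv, map_add, map_smul, map_smul, hgv, hgδ]
    module
  inv_mem' := by
    rintro g ⟨hgδ, a, b, ha, hgv⟩
    have hδ : g.symm δ = δ := by rw [LinearEquiv.symm_apply_eq, hgδ]
    refine ⟨hδ, a⁻¹, -(a⁻¹ * b), inv_ne_zero ha, ?_⟩
    rw [LinearEquiv.coe_inv, LinearEquiv.symm_apply_eq, map_add, map_smul, map_smul, hgv, hgδ,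
      smul_add, smul_smul, inv_mul_cancel₀ ha]
    module

end Stabilizer

lemma affClass_smul_add {m : ℕ} (δ v : Fin m → ℂ) {a : ℂ} (b : ℂ) (ha : a ≠ 0) :
    affClass δ (a • v + b • δ) = affClass δ v := by
  ext w
  constructor
  · rintro ⟨c, d, hc, rfl⟩
    exact ⟨c * a, c * b + d, mul_ne_zero hc ha, by module⟩
  · rintro ⟨c, d, hc, rfl⟩
    refine ⟨c * a⁻¹, d - c * a⁻¹ * b, mul_ne_zero hc (inv_ne_zero ha), ?_⟩
    rw [smul_add, smul_smul, smul_smul, mul_assoc, inv_mul_cancel₀ ha, mul_one]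
    module

lemma affClass_apply_eq_of_mem_classStabilizer {m : ℕ} {δ v : Fin m → ℂ}
    {g : (Fin m → ℂ) ≃ₗ[ℂ] (Fin m → ℂ)} (hg : g ∈ classStabilizer δ v) :
    affClass δ (g v) = affClass δ v := by
  obtain ⟨-, a, b, ha, hgv⟩ := hg
  rw [hgv, affClass_smul_add δ v b ha]

lemma _root_.LinearEquiv.commutator_apply_eq_iff {R V : Type*} [Semiring R] [AddCommMonoid V]
    [Module R V] (b d : V ≃ₗ[R] V) (x y : V) :
    (d⁻¹ * b⁻¹ * d * b) x = y ↔ b (d y) = d (b x) := by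
  rw [LinearEquiv.mul_apply, LinearEquiv.mul_apply, LinearEquiv.mul_apply, LinearEquiv.coe_inv,
    LinearEquiv.coe_inv, LinearEquiv.symm_apply_eq, LinearEquiv.symm_apply_eq, eq_comm]

lemma pow_apply_eq_add_smul {R V : Type*} [CommSemiring R] [AddCommMonoid V] [Module R V]
    {h : V ≃ₗ[R] V} {φ : V →ₗ[R] R} {w : V} (hh : ∀ x, h x = x + φ x • w) (hw : φ w = 0)
    (m : ℕ) (x : V) : (h ^ m) x = x + ((m : R) * φ x) • w := by
  induction m with
  | zero => simp
  | succ m ih =>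
    rw [pow_succ', LinearEquiv.mul_apply, ih, hh, map_add, map_smul, hw, smul_zero, add_zero,
      add_assoc, ← add_smul]
    push_cast
    ring_nf

lemma linearIndependent_pair_of_det_ne_zero {K ι : Type*} [Field K] {x y : ι → K} (p q : ι)
    (h : x p * y q - x q * y p ≠ 0) : LinearIndependent K ![x, y] := by
  refine LinearIndependent.pair_iff.mpr fun s t hst => ?_
  have hp := congrFun hst p
  have hq := congrFun hst q
  simp only [Pi.add_apply, Pi.smul_apply, smul_eq_mul, Pi.zero_apply] at hp hq
  have hs : s * (x p * y q - x q * y p) = 0 := by linear_combination y q * hp - y p * hq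
  have ht : t * (x p * y q - x q * y p) = 0 := by linear_combination x p * hq - x q * hp
  exact ⟨(mul_eq_zero.mp hs).resolve_right h, (mul_eq_zero.mp ht).resolve_right h⟩

/-- Cramer's rule on the coordinate plane spanned by `p` and `q`. -/
lemma exists_eq_smul_add_smul_of_det_ne_zero {K ι : Type*} [Field K] [DecidableEq ι]
    {x y v : ι → K} {p q : ι} (h : x p * y q - x q * y p ≠ 0)
    (hx : ∀ ν, ν ≠ p → ν ≠ q → x ν = 0) (hy : ∀ ν, ν ≠ p → ν ≠ q → y ν = 0)
    (hv : ∀ ν, ν ≠ p → ν ≠ q → v ν = 0) :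
    ∃ a b : K, v = a • x + b • y := by
  refine ⟨(v p * y q - v q * y p) / (x p * y q - x q * y p),
    (x p * v q - x q * v p) / (x p * y q - x q * y p), funext fun ν => ?_⟩
  simp only [Pi.add_apply, Pi.smul_apply, smul_eq_mul, div_mul_eq_mul_div, ← add_div]
  by_cases hνp : ν = p
  · subst hνp; rw [eq_div_iff h]; ring
  by_cases hνq : ν = q
  · subst hνq; rw [eq_div_iff h]; ring
  simp [hx ν hνp hνq, hy ν hνp hνq, hv ν hνp hνq]

lemma affClass_add_smul_injective {m : ℕ} {δ v w : Fin m → ℂ} (φ : (Fin m → ℂ) →ₗ[ℂ] ℂ)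
    (hv : φ v ≠ 0) (hw : φ w = 0) (hδ : φ δ = 0) (hind : LinearIndependent ℂ ![w, δ]) :
    Function.Injective fun s : ℂ => affClass δ (v + s • w) := by
  intro s t hst
  obtain ⟨a, b, -, hab⟩ : v + s • w ∈ affClass δ (v + t • w) := by
    simp only at hst
    rw [← hst]
    exact ⟨1, 0, one_ne_zero, by module⟩
  have ha : a = 1 := by
    have := congrArg φ hab
    simp only [map_add, map_smul, hw, hδ, smul_eq_mul, mul_zero, add_zero] at this
    exact (mul_eq_right₀ hv).mp this.symm
  subst ha
  have hdep : (s - t) • w + (-b) • δ = 0 := by linear_combination (norm := module) hab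
  exact sub_eq_zero.mp (LinearIndependent.pair_iff.mp hind _ _ hdep).1

lemma classOrbit_infinite_of_transvection {n : ℕ} {lam : Fin n → ℂ} {v w : Fin (n - 1) → ℂ}
    {h : (Fin (n - 1) → ℂ) ≃ₗ[ℂ] (Fin (n - 1) → ℂ)} {φ : (Fin (n - 1) → ℂ) →ₗ[ℂ] ℂ}
    (hG : h ∈ Glam lam) (hh : ∀ x, h x = x + φ x • w) (hw : φ w = 0)
    (hδ : φ (deltaVec lam) = 0) (hv : φ v ≠ 0) (hind : LinearIndependent ℂ ![w, deltaVec lam]) :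
    (classOrbit lam v).Infinite := by
  have hinj : Function.Injective fun m : ℕ => affClass (deltaVec lam) ((h ^ m) v) := by
    simp only [pow_apply_eq_add_smul hh hw]
    exact (affClass_add_smul_injective φ hv hw hδ hind).comp
      ((mul_left_injective₀ hv).comp Nat.cast_injective)
  exact Set.infinite_of_injective_forall_mem hinj fun m => ⟨h ^ m, pow_mem hG m, rfl⟩

lemma extv_val {m : ℕ} (u : Fin m → ℂ) (ν : Fin m) : extv u ν = u ν :=
  dif_pos ν.isLt

lemma braidL_of_eq_one {Λ : ℕ → ℂ} {i : ℕ} (hi : Λ i = 1) (τ : ℕ → ℂ) (j : ℕ) :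
    braidL Λ τ i j = fun ν => if ν = i then Λ j * τ i
      else if ν = j then τ j + (1 - Λ j) * (∏ k ∈ Finset.Ico (i + 1) j, (Λ k)⁻¹) * τ i
      else τ ν := by
  funext ν
  simp only [braidL, hi, sub_self, zero_mul, add_zero, one_mul, sub_zero]

lemma braidL_succ (Λ τ : ℕ → ℂ) (i : ℕ) :
    braidL Λ τ i (i + 1) = fun ν =>
      if ν = i then (1 - Λ i + Λ i * Λ (i + 1)) * τ i + Λ i * (1 - Λ i) * τ (i + 1)
      else if ν = i + 1 then (1 - Λ (i + 1)) * τ i + Λ i * τ (i + 1)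
      else τ ν := by
  funext ν
  simp only [braidL, Finset.prod_Icc_succ_top (Nat.le_succ i), Finset.sum_Icc_succ_top
    (Nat.le_succ i), Finset.Icc_self, Finset.prod_singleton, Finset.sum_singleton,
    Finset.Ico_self, Finset.prod_empty, Finset.sum_empty, Finset.Ico_add_one_right_eq_Icc]
  split_ifs <;> ring

section Generators

variable {n : ℕ} (lam : Fin n → ℂ) {i j : Fin (n - 1)}

lemma braidLV_eq_pairMap_of_eq_one (hi : extv lam i = 1)
    (x : Fin (n - 1) → ℂ) :
    braidLV lam i j x = pairMap i j !![extv lam j, 0;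
      (1 - extv lam j) * ∏ k ∈ Finset.Ico (i.val + 1) j, (extv lam k)⁻¹, 1] x := by
  ext ν
  simp only [braidLV, braidL_of_eq_one hi, pairMap_apply, Fin.val_inj, extv_val]
  split_ifs <;> simp only [Matrix.of_apply, Matrix.cons_val', Matrix.cons_val_zero,
    Matrix.cons_val_one, Matrix.cons_val_fin_one, Matrix.empty_val'] <;> ring

lemma braidLV_eq_pairMap_of_succ (hij : i.val + 1 = j) (x : Fin (n - 1) → ℂ) :
    braidLV lam i j x = pairMap i j !![1 - extv lam i + extv lam i * extv lam j,
      extv lam i * (1 - extv lam i); 1 - extv lam j, extv lam i] x := by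
  ext ν
  rw [braidLV, ← hij, braidL_succ]
  simp only [hij, pairMap_apply, Fin.val_inj, extv_val]
  simp

lemma braidLV_eq_self_of_eq_one (hi : extv lam i = 1) (j : Fin (n - 1))
    {x : Fin (n - 1) → ℂ} (hx : x i = 0) :
    braidLV lam i j x = x := by
  ext ν
  rw [braidLV_eq_pairMap_of_eq_one lam hi]
  rcases eq_or_ne ν i with rfl | hνi
  · simp [hx]
  rcases eq_or_ne ν j with rfl | hνj
  · simp [hx, hνi.symm]
  · simp [hνi, hνj]

end Generators

lemma pairMap_commutator_apply {K ι : Type*} [Field K] [DecidableEq ι] {i p q : ι}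
    (hip : i ≠ p) (hiq : i ≠ q) (hpq : p ≠ q) {a₁ a₂ : K} (ha₁ : a₁ ≠ 0) (ha₂ : a₂ ≠ 0)
    {B D : (ι → K) ≃ₗ[K] (ι → K)} (hB : ∀ x, B x = pairMap i p !![a₁, 0; 1 - a₁, 1] x)
    (hD : ∀ x, D x = pairMap p q !![1 - a₁ + a₁ * a₂, a₁ * (1 - a₁); 1 - a₂, a₁] x)
    (x : ι → K) :
    (D⁻¹ * B⁻¹ * D * B) x =
      x + x i • ((1 - a₁) * (1 - a₂) / (a₁ * a₂)) • (Pi.single q 1 - Pi.single p a₁) := by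
  rw [LinearEquiv.commutator_apply_eq_iff, hB, hD, hD, hB]
  ext ν
  rcases eq_or_ne ν i with rfl | hνi
  · simp [hip, hiq, hpq]
  rcases eq_or_ne ν p with rfl | hνp
  · simp only [pairMap_apply_left, pairMap_apply_right hip, pairMap_apply_of_ne hip hiq,
      pairMap_apply_of_ne hiq.symm hpq.symm, Pi.add_apply, Pi.smul_apply, Pi.sub_apply,
      Pi.single_eq_same, Pi.single_eq_of_ne hpq, Pi.single_eq_of_ne hpq.symm,
      Pi.single_eq_of_ne hip, Pi.single_eq_of_ne hiq, smul_eq_mul]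
    field_simp
    ring
  rcases eq_or_ne ν q with rfl | hνq
  · simp only [pairMap_apply_right hpq, pairMap_apply_right hip,
      pairMap_apply_of_ne hiq.symm hpq.symm, Pi.add_apply, Pi.smul_apply, Pi.sub_apply,
      Pi.single_eq_same, Pi.single_eq_of_ne hpq, Pi.single_eq_of_ne hpq.symm, smul_eq_mul]
    field_simp
    ring
  · simp [hνi, hνp, hνq]

/-- The first `n - 1` entries of `λ` are `(1, …, 1, a₁, a₂)`, with `a₁, a₂` in positions `p, q`;
the last entry `λₙ` does not enter the maps `L_{i,j}`. -/
structure IsIndexThree {n : ℕ} (lam : Fin n → ℂ) (a₁ a₂ : ℂ) (p q : Fin (n - 1)) : Prop where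
  succ_p : p.val + 1 = q
  succ_q : q.val + 1 = n - 1
  extv_of_lt : ∀ k < p.val, extv lam k = 1
  extv_p : extv lam p = a₁
  extv_q : extv lam q = a₂

namespace IsIndexThree

variable {n : ℕ} {lam : Fin n → ℂ} {a₁ a₂ : ℂ} {p q : Fin (n - 1)}

lemma p_lt_q (h : IsIndexThree lam a₁ a₂ p q) : p < q := by
  have := h.succ_p
  rw [Fin.lt_def]
  omega

lemma lt_p_of_ne (h : IsIndexThree lam a₁ a₂ p q) {ν : Fin (n - 1)} (hνp : ν ≠ p)
    (hνq : ν ≠ q) : ν < p := by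
  have := h.succ_p
  have := h.succ_q
  have := ν.isLt
  rw [Fin.lt_def]
  rw [Ne, Fin.ext_iff] at hνp hνq
  omega

lemma deltaVec_eq (h : IsIndexThree lam a₁ a₂ p q) :
    deltaVec lam = Pi.single p (1 - a₁) + Pi.single q (1 - a₂) := by
  ext ν
  simp only [deltaVec, Pi.add_apply, Pi.single_apply]
  rcases eq_or_ne ν p with rfl | hνp
  · rw [h.extv_p, if_pos rfl, if_neg h.p_lt_q.ne]
    ring
  rcases eq_or_ne ν q with rfl | hνq
  · rw [h.extv_q, if_neg hνp, if_pos rfl]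
    ring
  · rw [h.extv_of_lt ν (h.lt_p_of_ne hνp hνq), if_neg hνp, if_neg hνq]
    ring

lemma braidLV_of_lt_p (h : IsIndexThree lam a₁ a₂ p q) {i : Fin (n - 1)} (hi : i < p)
    (x : Fin (n - 1) → ℂ) : braidLV lam i p x = pairMap i p !![a₁, 0; 1 - a₁, 1] x := by
  have hprod : ∏ k ∈ Finset.Ico (i.val + 1) p, (extv lam k)⁻¹ = 1 :=
    Finset.prod_eq_one fun k hk => by rw [h.extv_of_lt k (Finset.mem_Ico.mp hk).2, inv_one]
  rw [braidLV_eq_pairMap_of_eq_one lam (h.extv_of_lt i hi), hprod, h.extv_p, mul_one]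

lemma braidLV_p_q (h : IsIndexThree lam a₁ a₂ p q) (x : Fin (n - 1) → ℂ) :
    braidLV lam p q x =
      pairMap p q !![1 - a₁ + a₁ * a₂, a₁ * (1 - a₁); 1 - a₂, a₁] x := by
  rw [braidLV_eq_pairMap_of_succ lam h.succ_p, h.extv_p, h.extv_q]

lemma braidLV_p_q_deltaVec (h : IsIndexThree lam a₁ a₂ p q) :
    braidLV lam p q (deltaVec lam) = deltaVec lam := by
  have hpq := h.p_lt_q.ne
  ext ν
  rw [h.braidLV_p_q, h.deltaVec_eq]
  rcases eq_or_ne ν p with rfl | hνp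
  · simp only [pairMap_apply_left, Pi.add_apply, Pi.single_eq_same, Pi.single_eq_of_ne hpq,
      Pi.single_eq_of_ne hpq.symm]
    ring
  rcases eq_or_ne ν q with rfl | hνq
  · simp only [pairMap_apply_right hpq, Pi.add_apply, Pi.single_eq_same,
      Pi.single_eq_of_ne hpq, Pi.single_eq_of_ne hpq.symm]
    ring
  · simp [hνp, hνq]

lemma braidLV_p_q_single (h : IsIndexThree lam a₁ a₂ p q) :
    braidLV lam p q (Pi.single q (-a₂)) =
      (a₁ * a₂) • Pi.single q (-a₂) + (-(a₁ * a₂)) • deltaVec lam := by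
  have hpq := h.p_lt_q.ne
  ext ν
  rw [h.braidLV_p_q, h.deltaVec_eq]
  rcases eq_or_ne ν p with rfl | hνp
  · simp only [pairMap_apply_left, Pi.add_apply, Pi.smul_apply, Pi.single_eq_same,
      Pi.single_eq_of_ne hpq, smul_eq_mul]
    ring
  rcases eq_or_ne ν q with rfl | hνq
  · simp only [pairMap_apply_right hpq, Pi.add_apply, Pi.smul_apply, Pi.single_eq_same,
      Pi.single_eq_of_ne hpq, Pi.single_eq_of_ne hpq.symm, smul_eq_mul]
    ring
  · simp [hνp, hνq]

lemma Glam_le_classStabilizer (h : IsIndexThree lam a₁ a₂ p q) (ha₁ : a₁ ≠ 0)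
    (ha₂ : a₂ ≠ 0) : Glam lam ≤ classStabilizer (deltaVec lam) (Pi.single q (-a₂)) := by
  refine (Subgroup.closure_le _).mpr ?_
  rintro g ⟨i, j, hij, hg⟩
  have hiq : i ≠ q := by
    rintro rfl
    have := h.succ_q
    have := j.isLt
    rw [Fin.lt_def] at hij
    omega
  rcases eq_or_ne i p with rfl | hip
  · obtain rfl : j = q := by
      by_contra hjq
      exact (h.lt_p_of_ne (hij.ne' : j ≠ i) hjq).not_gt hij
    exact ⟨(hg _).trans h.braidLV_p_q_deltaVec, a₁ * a₂, -(a₁ * a₂), mul_ne_zero ha₁ ha₂,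
      (hg _).trans h.braidLV_p_q_single⟩
  · have hfix : ∀ x : Fin (n - 1) → ℂ, x i = 0 → g x = x := fun x hx =>
      (hg x).trans (braidLV_eq_self_of_eq_one lam (h.extv_of_lt i (h.lt_p_of_ne hip hiq)) j hx)
    have hδ : deltaVec lam i = 0 := by simp [h.deltaVec_eq, hip, hiq]
    exact ⟨hfix _ hδ, 1, 0, one_ne_zero, by rw [hfix _ (by simp [hiq])]; module⟩

lemma exists_lt_apply_ne_zero (h : IsIndexThree lam a₁ a₂ p q) (ha₂ : a₂ ≠ 0)
    (ha₁' : a₁ ≠ 1) {v : Fin (n - 1) → ℂ} (hv : ¬∃ c : ℂ, v = c • deltaVec lam)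
    (hv₀ : affClass (deltaVec lam) v ≠ affClass (deltaVec lam) (Pi.single q (-a₂))) :
    ∃ i < p, v i ≠ 0 := by
  by_contra! hvp
  have hpq := h.p_lt_q.ne
  have hdet : (Pi.single q (-a₂) : Fin (n - 1) → ℂ) p * deltaVec lam q
      - (Pi.single q (-a₂) : Fin (n - 1) → ℂ) q * deltaVec lam p ≠ 0 := by
    simp [h.deltaVec_eq, hpq, ha₂, sub_eq_zero, Ne.symm ha₁']
  obtain ⟨a, b, hab⟩ := exists_eq_smul_add_smul_of_det_ne_zero hdet
    (fun ν _ hνq => by simp [hνq]) (fun ν hνp hνq => by simp [h.deltaVec_eq, hνp, hνq])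
    (fun ν hνp hνq => hvp ν (h.lt_p_of_ne hνp hνq))
  rcases eq_or_ne a 0 with rfl | ha
  · exact hv ⟨b, by rw [hab, zero_smul, zero_add]⟩
  · exact hv₀ (hab ▸ affClass_smul_add _ _ b ha)

lemma classOrbit_infinite_of_apply_ne_zero (h : IsIndexThree lam a₁ a₂ p q) (ha₁ : a₁ ≠ 0)
    (ha₂ : a₂ ≠ 0) (ha₁' : a₁ ≠ 1) (ha₂' : a₂ ≠ 1) (ha₁₂ : a₁ * a₂ ≠ 1) {v : Fin (n - 1) → ℂ}
    {i : Fin (n - 1)} (hi : i < p) (hvi : v i ≠ 0) : (classOrbit lam v).Infinite := by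
  have hpq := h.p_lt_q.ne
  have hiq : i ≠ q := (hi.trans h.p_lt_q).ne
  let B := pairEquiv hi.ne !![a₁, 0; 1 - a₁, 1] (by simp [ha₁])
  let D := pairEquiv hpq !![1 - a₁ + a₁ * a₂, a₁ * (1 - a₁); 1 - a₂, a₁]
    (by rw [Matrix.det_fin_two_of, show (1 - a₁ + a₁ * a₂) * a₁ - a₁ * (1 - a₁) * (1 - a₂)
      = a₁ * a₂ by ring]; exact (mul_ne_zero ha₁ ha₂).isUnit)
  have hB : B ∈ Glam lam :=
    Subgroup.subset_closure ⟨i, p, hi, fun x => (h.braidLV_of_lt_p hi x).symm⟩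
  have hD : D ∈ Glam lam :=
    Subgroup.subset_closure ⟨p, q, h.p_lt_q, fun x => (h.braidLV_p_q x).symm⟩
  refine classOrbit_infinite_of_transvection (φ := LinearMap.proj i)
    (mul_mem (mul_mem (mul_mem (inv_mem hD) (inv_mem hB)) hD) hB)
    (pairMap_commutator_apply hi.ne hiq hpq ha₁ ha₂ (fun _ => rfl) (fun _ => rfl))
    (by simp [hi.ne, hiq]) (by simp [h.deltaVec_eq, hi.ne, hiq]) hvi ?_
  have hc : (1 - a₁) * (1 - a₂) / (a₁ * a₂) ≠ 0 := by
    simp [sub_eq_zero, ha₁, ha₂, Ne.symm ha₁', Ne.symm ha₂']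
  refine linearIndependent_pair_of_det_ne_zero p q (ne_of_eq_of_ne
    (b := -((1 - a₁) * (1 - a₂) / (a₁ * a₂)) * (1 - a₁ * a₂)) ?_ ?_)
  · simp only [h.deltaVec_eq, Pi.add_apply, Pi.smul_apply, Pi.sub_apply, Pi.single_eq_same,
      Pi.single_eq_of_ne hpq, Pi.single_eq_of_ne hpq.symm, smul_eq_mul]
    ring
  · exact mul_ne_zero (neg_ne_zero.mpr hc) (sub_ne_zero.mpr (Ne.symm ha₁₂))

end IsIndexThree

lemma isIndexThree_of_eq {n : ℕ} (hn : 4 ≤ n) {a₁ a₂ a₃ : ℂ} {lam : Fin n → ℂ}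
    (hlam : lam = fun i => if i.val = n - 3 then a₁ else if i.val = n - 2 then a₂
      else if i.val = n - 1 then a₃ else 1) :
    IsIndexThree lam a₁ a₂ ⟨n - 3, by omega⟩ ⟨n - 2, by omega⟩ where
  succ_p := show n - 3 + 1 = n - 2 by omega
  succ_q := show n - 2 + 1 = n - 1 by omega
  extv_of_lt k (hk : k < n - 3) := by
    simp [extv, hlam, show k < n by omega, show k ≠ n - 3 by omega, show k ≠ n - 2 by omega,
      show k ≠ n - 1 by omega]
  extv_p := by simp [extv, hlam, show n - 3 < n by omega]
  extv_q := by simp [extv, hlam, show n - 2 < n by omega, show n - 2 ≠ n - 3 by omega]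

theorem index_three_unique_fixed_point_general (n : ℕ) (hn : 4 ≤ n) (a₁ a₂ a₃ : ℂ)
    (ha₁ : a₁ ≠ 0) (ha₂ : a₂ ≠ 0)
    (ha₁' : a₁ ≠ 1) (ha₂' : a₂ ≠ 1) (ha₃' : a₃ ≠ 1) (hprod : a₁ * a₂ * a₃ = 1)
    (lam : Fin n → ℂ)
    (hlam : lam = fun i => if i.val = n - 3 then a₁ else if i.val = n - 2 then a₂
      else if i.val = n - 1 then a₃ else 1)
    (v₀ : Fin (n - 1) → ℂ)
    (hv₀ : v₀ = fun i => if i.val = n - 2 then -a₂ else 0) :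
    (∀ g ∈ Glam lam, affClass (deltaVec lam) (g v₀) = affClass (deltaVec lam) v₀) ∧
    (∀ v : Fin (n - 1) → ℂ, (¬ ∃ c : ℂ, v = c • deltaVec lam) →
      affClass (deltaVec lam) v ≠ affClass (deltaVec lam) v₀ →
      (classOrbit lam v).Infinite) := by
  have h := isIndexThree_of_eq hn hlam
  obtain rfl : v₀ = Pi.single ⟨n - 2, by omega⟩ (-a₂) := by
    ext ν
    simp [hv₀, Pi.single_apply, Fin.ext_iff]
  have ha₁₂ : a₁ * a₂ ≠ 1 := fun h₁₂ => ha₃' (by rwa [h₁₂, one_mul] at hprod)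
  refine ⟨fun g hg => affClass_apply_eq_of_mem_classStabilizer
    (h.Glam_le_classStabilizer ha₁ ha₂ hg), fun v hv hne => ?_⟩
  obtain ⟨i, hi, hvi⟩ := h.exists_lt_apply_ne_zero ha₂ ha₁' hv hne
  exact h.classOrbit_infinite_of_apply_ne_zero ha₁ ha₂ ha₁' ha₂' ha₁₂ hi hvi

/-- Lemma 3.5 of the paper (nontriviality index 3): for
`λ = (1,…,1,a₁,a₂,a₃)` with `aᵢ ≠ 1` and `a₁a₂a₃ = 1`, the class of
`v⁰ = (0,…,0,−a₂)` is fixed by every element of `G_λ`, and every other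
non-abelian class has infinite `G_λ`-orbit. -/
theorem index_three_unique_fixed_point (n : ℕ) (hn : 4 ≤ n) (a₁ a₂ a₃ : ℂ)
    (ha₁ : a₁ ≠ 0) (ha₂ : a₂ ≠ 0) (ha₃ : a₃ ≠ 0)
    (ha₁' : a₁ ≠ 1) (ha₂' : a₂ ≠ 1) (ha₃' : a₃ ≠ 1) (hprod : a₁ * a₂ * a₃ = 1)
    (lam : Fin n → ℂ)
    (hlam : lam = fun i => if i.val = n - 3 then a₁ else if i.val = n - 2 then a₂
      else if i.val = n - 1 then a₃ else 1)
    (v₀ : Fin (n - 1) → ℂ)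
    (hv₀ : v₀ = fun i => if i.val = n - 2 then -a₂ else 0) :
    (∀ g ∈ Glam lam, affClass (deltaVec lam) (g v₀) = affClass (deltaVec lam) v₀) ∧
    (∀ v : Fin (n - 1) → ℂ, (¬ ∃ c : ℂ, v = c • deltaVec lam) →
      affClass (deltaVec lam) v ≠ affClass (deltaVec lam) v₀ →
      (classOrbit lam v).Infinite) :=
  index_three_unique_fixed_point_general n hn a₁ a₂ a₃ ha₁ ha₂ ha₁' ha₂' ha₃' hprod lam hlam v₀ hv₀

end BraidAff
end
end

section
/- Let n ≥ 4 and a ∈ ℂ* ∖ {1}. Set λ = (1,…,1,a,a⁻¹,a,a⁻¹) ∈ (ℂ*)ⁿ (so λ_{n−3} = a, λ_{n−2} = a⁻¹, λ_{n−1} = a, λₙ = a⁻¹ and all other entries equal 1). Then every v ∈ ℂ^{n−1} with v ∉ ℂ·δ_λ has infinite G_λ-orbit of the class [v]. -/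
noncomputable section

/-!
Two adjacent pure braids act as transvections. Let `(p, q, r) = (k, k+1, k+2)` be the 0-based
positions of `a, a⁻¹, a` in `λ`. Then `σ_{p,q}²` is `x ↦ x + φ₁(x) u₁` with `φ₁(x) = x_p + a x_q`
and `σ_{q,r}²` is `x ↦ x + φ₂(x) u₂` with `φ₂(x) = x_q + a⁻¹ x_r`, where `φᵢ` kills `uᵢ` and `δ_λ`
and `uᵢ` is not proportional to `δ_λ`. If `φᵢ(v) ≠ 0`, the iterates give the pairwise distinct
classes `[v + t φᵢ(v) uᵢ]`, `t ∈ ℕ`. If `φ₁(v) = φ₂(v) = 0` and `v` is not a multiple of `δ_λ`,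
some `v_i` with `i < p` is nonzero; as `λ_l = 1` for `l < p`, `σ_{i,p}²` is a dilatransvection
moving `v` to a vector at which `φ₁` equals `(1 - a) v_i ≠ 0`.
-/

namespace BraidAff
open Module Function

section General
variable {K V : Type*} [Field K] [AddCommGroup V] [Module K V]

lemma pow_apply_of_forall_apply_eq_add_smul {g : V ≃ₗ[K] V} {f : Dual K V} {u : V}
    (hg : ∀ x, g x = x + f x • u) (hfu : f u = 0) (x : V) (t : ℕ) :
    (g ^ t) x = x + ((t : K) * f x) • u := by
  induction t with
  | zero => simp
  | succ t ih =>
    rw [pow_succ', LinearEquiv.mul_apply, ih, hg]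
    simp only [map_add, map_smul, hfu, smul_eq_mul, mul_zero, add_zero]
    push_cast
    module

lemma linearIndependent_pair_of_apply {ι : Type*} {x y : ι → K} {μ ν : ι}
    (hxμ : x μ = 0) (hyμ : y μ ≠ 0) (hxν : x ν ≠ 0) : LinearIndependent K ![x, y] := by
  refine LinearIndependent.pair_iff.mpr fun s t hst => ?_
  have ht : t = 0 := by
    simpa [hxμ, hyμ] using congrFun hst μ
  subst ht
  exact ⟨by simpa [hxν] using congrFun hst ν, rfl⟩

end General

lemma affClass_add_smul_injective_s9 {m : ℕ} {δ v u : Fin m → ℂ} {f : Dual ℂ (Fin m → ℂ)}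
    (hfv : f v ≠ 0) (hfu : f u = 0) (hfδ : f δ = 0) (hind : LinearIndependent ℂ ![u, δ]) :
    Injective fun s : ℂ => affClass δ (v + s • u) := by
  intro s s' hss'
  have hmem : v + s' • u ∈ affClass δ (v + s • u) := by
    rw [show affClass δ (v + s • u) = affClass δ (v + s' • u) from hss']
    exact ⟨1, 0, one_ne_zero, by simp⟩
  obtain ⟨α, β, -, hαβ⟩ := hmem
  have hα : α = 1 := by
    have := congrArg f hαβ
    simp only [map_add, map_smul, hfu, hfδ, smul_eq_mul, mul_zero, add_zero] at this
    exact (mul_eq_right₀ hfv).mp this.symm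
  subst hα
  have hlin : (s' - s) • u + (-β) • δ = 0 := by
    linear_combination (norm := module) hαβ
  exact (sub_eq_zero.mp (LinearIndependent.pair_iff.mp hind _ _ hlin).1).symm

section Orbit
variable {n : ℕ} {lam : Fin n → ℂ}

lemma dilatransvection_mem_Glam {i j : Fin (n - 1)} (hij : i < j)
    {f : Dual ℂ (Fin (n - 1) → ℂ)} {u : Fin (n - 1) → ℂ} (hu : IsUnit (1 + f u))
    (hL : ∀ τ, braidLV lam i j τ = τ + f τ • u) :
    LinearEquiv.dilatransvection hu ∈ Glam lam :=
  Subgroup.subset_closure ⟨i, j, hij, fun τ => by rw [LinearEquiv.dilatransvection.apply, hL]⟩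

lemma classOrbit_subset {g : (Fin (n - 1) → ℂ) ≃ₗ[ℂ] (Fin (n - 1) → ℂ)} (hg : g ∈ Glam lam)
    (v : Fin (n - 1) → ℂ) : classOrbit lam (g v) ⊆ classOrbit lam v := by
  rintro S ⟨h, hh, rfl⟩
  exact ⟨h * g, mul_mem hh hg, rfl⟩

lemma classOrbit_infinite_of_transvection_s9 {g : (Fin (n - 1) → ℂ) ≃ₗ[ℂ] (Fin (n - 1) → ℂ)}
    (hg : g ∈ Glam lam) {f : Dual ℂ (Fin (n - 1) → ℂ)} {u : Fin (n - 1) → ℂ}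
    (hgf : ∀ x, g x = x + f x • u) (hfu : f u = 0) (hfδ : f (deltaVec lam) = 0)
    (hind : LinearIndependent ℂ ![u, deltaVec lam]) {v : Fin (n - 1) → ℂ} (hfv : f v ≠ 0) :
    (classOrbit lam v).Infinite := by
  refine Set.infinite_of_injective_forall_mem
    (f := fun t : ℕ => affClass (deltaVec lam) (v + ((t : ℂ) * f v) • u)) ?_ fun t => ?_
  · exact (affClass_add_smul_injective_s9 hfv hfu hfδ hind).comp
      ((mul_left_injective₀ hfv).comp Nat.cast_injective)
  · exact ⟨g ^ t, pow_mem hg t, by rw [pow_apply_of_forall_apply_eq_add_smul hgf hfu]⟩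

lemma braidLV_adjacent {i j : Fin (n - 1)} (hij : j.val = i.val + 1)
    {b : ℂ} (hb : b ≠ 0) (hi : extv lam i = b) (hj : extv lam j = b⁻¹) (τ : Fin (n - 1) → ℂ) :
    braidLV lam i j τ =
      τ + (τ i + b * τ j) • ((1 - b) • Pi.single i 1 + (1 - b⁻¹) • Pi.single j 1) := by
  have hτ : ∀ ν : Fin (n - 1), extv τ ν = τ ν := fun ν => dif_pos ν.isLt
  have hprod : ∏ k ∈ Finset.Icc i.val j, extv lam k = 1 := by
    rw [hij, Finset.prod_Icc_succ_top (Nat.le_succ _), Finset.Icc_self, Finset.prod_singleton,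
      ← hij, hi, hj, mul_inv_cancel₀ hb]
  have hsum : ∑ k ∈ Finset.Icc i.val j, (∏ l ∈ Finset.Ico i.val k, extv lam l) * extv τ k
      = τ i + b * τ j := by
    rw [hij, Finset.sum_Icc_succ_top (Nat.le_succ _), Finset.Icc_self, Finset.sum_singleton,
      Finset.Ico_self, Finset.prod_empty, Finset.Ico_add_one_right_eq_Icc, Finset.Icc_self,
      Finset.prod_singleton, ← hij, hi, hτ, hτ, one_mul]
  have hIco : Finset.Ico (i.val + 1) j = ∅ := by rw [hij, Finset.Ico_self]
  have hij' : i ≠ j := fun h => by rw [h] at hij; omega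
  funext ν
  simp only [braidLV, braidL, hprod, hsum, hIco, hi, hj, hτ, Finset.prod_empty,
    Finset.sum_empty, ← Fin.ext_iff]
  rcases eq_or_ne ν i with rfl | hνi
  · simp only [↓reduceIte, mul_one, smul_add, Pi.add_apply, Pi.smul_apply, Pi.single_eq_same,
      smul_eq_mul, ne_eq, hij', not_false_eq_true, Pi.single_eq_of_ne, mul_zero, add_zero]
    field_simp
    ring
  rcases eq_or_ne ν j with rfl | hνj
  · simp only [hνi, ↓reduceIte, mul_one, mul_zero, sub_zero, smul_add, Pi.add_apply,
      Pi.smul_apply, ne_eq, not_false_eq_true, Pi.single_eq_of_ne, smul_eq_mul, Pi.single_eq_same,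
      zero_add]
    field_simp
    ring
  · simp [hνi, hνj]

lemma braidLV_of_extv_eq_one {i j : Fin (n - 1)} (hij : i < j)
    (hone : ∀ l, i.val ≤ l → l < j.val → extv lam l = 1) (τ : Fin (n - 1) → ℂ) :
    braidLV lam i j τ = τ + τ i • ((extv lam j - 1) • (Pi.single i 1 - Pi.single j 1)) := by
  have hτ : ∀ ν : Fin (n - 1), extv τ ν = τ ν := fun ν => dif_pos ν.isLt
  have hprod : ∏ k ∈ Finset.Ico (i.val + 1) j, (extv lam k)⁻¹ = 1 :=
    Finset.prod_eq_one fun l hl => by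
      rw [Finset.mem_Ico] at hl
      rw [hone l (by omega) hl.2, inv_one]
  have hij' : i ≠ j := hij.ne
  funext ν
  simp only [braidLV, braidL, hprod, hone i le_rfl hij, hτ, sub_self, zero_mul, add_zero,
    sub_zero, ← Fin.ext_iff]
  rcases eq_or_ne ν i with rfl | hνi
  · simp only [↓reduceIte, Pi.add_apply, Pi.smul_apply, Pi.sub_apply, Pi.single_eq_same, ne_eq,
      hij', not_false_eq_true, Pi.single_eq_of_ne, sub_zero, smul_eq_mul, mul_one]
    ring
  rcases eq_or_ne ν j with rfl | hνj
  · simp only [hνi, ↓reduceIte, one_mul, mul_one, Pi.add_apply, Pi.smul_apply, Pi.sub_apply,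
      ne_eq, not_false_eq_true, Pi.single_eq_of_ne, Pi.single_eq_same, zero_sub, smul_eq_mul]
    ring
  · simp [hνi, hνj]

lemma exists_mem_Glam_apply_eq_of_extv_eq_one {i j : Fin (n - 1)} (hij : i < j)
    (hone : ∀ l, i.val ≤ l → l < j.val → extv lam l = 1) (hj : extv lam j ≠ 0)
    (v : Fin (n - 1) → ℂ) :
    ∃ g ∈ Glam lam, g v = v + (v i * (extv lam j - 1)) • (Pi.single i 1 - Pi.single j 1) := by
  have hu : IsUnit
      (1 + LinearMap.proj (R := ℂ) i ((extv lam j - 1) • (Pi.single i 1 - Pi.single j 1))) := by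
    simp [hij.ne', hj]
  refine ⟨_, dilatransvection_mem_Glam hij hu (braidLV_of_extv_eq_one hij hone), ?_⟩
  rw [LinearEquiv.dilatransvection.apply, smul_smul]
  rfl

lemma classOrbit_infinite_of_adjacent {i j : Fin (n - 1)} (hij : j.val = i.val + 1)
    {b : ℂ} (hb : b ≠ 0) (hi : extv lam i = b) (hj : extv lam j = b⁻¹)
    (hind : LinearIndependent ℂ
      ![(1 - b) • Pi.single i 1 + (1 - b⁻¹) • Pi.single j 1, deltaVec lam])
    {v : Fin (n - 1) → ℂ} (hv : v i + b * v j ≠ 0) :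
    (classOrbit lam v).Infinite := by
  set f : Dual ℂ (Fin (n - 1) → ℂ) := LinearMap.proj i + b • LinearMap.proj j
  have hij' : i ≠ j := fun h => by rw [h] at hij; omega
  have hfu : f ((1 - b) • Pi.single i 1 + (1 - b⁻¹) • Pi.single j 1) = 0 := by
    simp only [f, LinearMap.add_apply, LinearMap.smul_apply, LinearMap.proj_apply, Pi.add_apply,
      Pi.smul_apply, Pi.single_eq_same, Pi.single_eq_of_ne hij', Pi.single_eq_of_ne hij'.symm,
      smul_eq_mul]
    field_simp
    ring
  have hfδ : f (deltaVec lam) = 0 := by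
    simp only [f, deltaVec, LinearMap.add_apply, LinearMap.smul_apply, LinearMap.proj_apply,
      hi, hj, smul_eq_mul]
    field_simp
    ring
  exact classOrbit_infinite_of_transvection_s9
    (dilatransvection_mem_Glam (f := f) (Fin.lt_def.mpr (by omega)) (by simp [hfu])
      (braidLV_adjacent hij hb hi hj))
    (fun _ => LinearEquiv.dilatransvection.apply) hfu hfδ hind hv

end Orbit

section AAinv
variable {k : ℕ} {a : ℂ}

def aainvLam (k : ℕ) (a : ℂ) : Fin (k + 4) → ℂ := fun i =>
  if i.val = k then a else if i.val = k + 1 then a⁻¹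
    else if i.val = k + 2 then a else if i.val = k + 3 then a⁻¹ else 1

@[simp] lemma extv_aainvLam_self : extv (aainvLam k a) k = a := by
  simp [extv, aainvLam]

@[simp] lemma extv_aainvLam_add_one : extv (aainvLam k a) (k + 1) = a⁻¹ := by
  simp [extv, aainvLam]

@[simp] lemma extv_aainvLam_add_two : extv (aainvLam k a) (k + 2) = a := by
  simp [extv, aainvLam]

lemma extv_aainvLam_of_lt {l : ℕ} (hl : l < k) : extv (aainvLam k a) l = 1 := by
  simp only [extv, aainvLam, dif_pos (show l < k + 4 by omega)]
  split_ifs <;> first | rfl | omega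

lemma classOrbit_aainvLam_infinite (ha : a ≠ 0) (ha1 : a ≠ 1) {p q r : Fin (k + 4 - 1)}
    (hp : p.val = k) (hq : q.val = k + 1) (hr : r.val = k + 2) {v : Fin (k + 4 - 1) → ℂ}
    (hv : v p + a * v q ≠ 0 ∨ v q + a⁻¹ * v r ≠ 0) :
    (classOrbit (aainvLam k a) v).Infinite := by
  have h1a : 1 - a ≠ 0 := sub_ne_zero.mpr (Ne.symm ha1)
  have hpq : p ≠ q := Fin.ne_of_val_ne (by omega)
  have hpr : p ≠ r := Fin.ne_of_val_ne (by omega)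
  have hqr : q ≠ r := Fin.ne_of_val_ne (by omega)
  rcases hv with hv | hv
  · refine classOrbit_infinite_of_adjacent (by omega) ha (by simp [hp]) (by simp [hq]) ?_ hv
    exact linearIndependent_pair_of_apply (μ := r) (ν := p) (by simp [hpr.symm, hqr.symm])
      (by simp [deltaVec, hr, h1a]) (by simp [hpq, h1a])
  · refine classOrbit_infinite_of_adjacent (by omega) (inv_ne_zero ha) (by simp [hq])
      (by simp [hr]) ?_ hv
    exact linearIndependent_pair_of_apply (μ := p) (ν := r) (by simp [hpq, hpr])
      (by simp [deltaVec, hp, h1a]) (by simp [hqr.symm, h1a])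

lemma classOrbit_aainvLam_infinite_of_apply_ne_zero (ha : a ≠ 0) (ha1 : a ≠ 1)
    {p q r : Fin (k + 4 - 1)} (hp : p.val = k) (hq : q.val = k + 1) (hr : r.val = k + 2)
    {v : Fin (k + 4 - 1) → ℂ} {i : Fin (k + 4 - 1)} (hik : i.val < k) (hvi : v i ≠ 0)
    (hpq : v p + a * v q = 0) :
    (classOrbit (aainvLam k a) v).Infinite := by
  have hextv : extv (aainvLam k a) p = a := by rw [hp]; exact extv_aainvLam_self
  obtain ⟨H, hH, hHv⟩ := exists_mem_Glam_apply_eq_of_extv_eq_one (i := i) (j := p)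
    (Fin.lt_def.mpr (by omega)) (fun l _ hl => extv_aainvLam_of_lt (by omega)) (by rwa [hextv]) v
  refine (classOrbit_aainvLam_infinite ha ha1 hp hq hr (Or.inl ?_)).mono (classOrbit_subset hH v)
  have hip : i ≠ p := Fin.ne_of_val_ne (by omega)
  have hiq : i ≠ q := Fin.ne_of_val_ne (by omega)
  have hqp : q ≠ p := Fin.ne_of_val_ne (by omega)
  simp only [hHv, hextv, Pi.add_apply, Pi.smul_apply, Pi.sub_apply, Pi.single_eq_same,
    Pi.single_eq_of_ne hip.symm, Pi.single_eq_of_ne hiq.symm, Pi.single_eq_of_ne hqp, smul_eq_mul]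
  exact fun h => mul_ne_zero hvi (sub_ne_zero.mpr ha1) (by linear_combination hpq - h)

lemma exists_eq_smul_deltaVec_aainvLam (ha : a ≠ 0) (ha1 : a ≠ 1) {p q r : Fin (k + 4 - 1)}
    (hp : p.val = k) (hq : q.val = k + 1) (hr : r.val = k + 2) {v : Fin (k + 4 - 1) → ℂ}
    (hlow : ∀ ν : Fin (k + 4 - 1), ν.val < k → v ν = 0)
    (hpq : v p + a * v q = 0) (hqr : v q + a⁻¹ * v r = 0) :
    ∃ c : ℂ, v = c • deltaVec (aainvLam k a) := by
  have h1a : 1 - a ≠ 0 := sub_ne_zero.mpr (Ne.symm ha1)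
  refine ⟨v p / (1 - a), funext fun ν => ?_⟩
  obtain hν | rfl | rfl | rfl : ν.val < k ∨ ν = p ∨ ν = q ∨ ν = r := by
    simp only [Fin.ext_iff]; omega
  · simp [hlow ν hν, deltaVec, extv_aainvLam_of_lt hν]
  · simp [deltaVec, hp, h1a]
  · simp only [deltaVec, hq, extv_aainvLam_add_one, Pi.smul_apply, smul_eq_mul]
    rw [div_mul_eq_mul_div, eq_div_iff h1a]
    linear_combination -(1 - a⁻¹) * hpq - v ν * mul_inv_cancel₀ ha
  · simp only [deltaVec, hr, extv_aainvLam_add_two, Pi.smul_apply, smul_eq_mul]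
    rw [div_mul_cancel₀ _ h1a]
    linear_combination a * hqr - hpq - v ν * mul_inv_cancel₀ ha

end AAinv

/-- Lemma 3.6 of the paper: for `λ = (1,…,1,a,a⁻¹,a,a⁻¹)` with `a ≠ 1`, every
non-abelian class `[v]` has infinite `G_λ`-orbit. -/
theorem a_ainv_a_ainv_infinite (n : ℕ) (hn : 4 ≤ n) (a : ℂ)
    (ha : a ≠ 0) (ha1 : a ≠ 1)
    (lam : Fin n → ℂ)
    (hlam : lam = fun i => if i.val = n - 4 then a else if i.val = n - 3 then a⁻¹
      else if i.val = n - 2 then a else if i.val = n - 1 then a⁻¹ else 1)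
    (v : Fin (n - 1) → ℂ) (hv : ¬ ∃ c : ℂ, v = c • deltaVec lam) :
    (classOrbit lam v).Infinite := by
  obtain ⟨k, rfl⟩ : ∃ k, n = k + 4 := ⟨n - 4, by omega⟩
  obtain rfl : lam = aainvLam k a := hlam
  let p : Fin (k + 4 - 1) := ⟨k, by omega⟩
  let q : Fin (k + 4 - 1) := ⟨k + 1, by omega⟩
  let r : Fin (k + 4 - 1) := ⟨k + 2, by omega⟩
  by_cases hpqr : v p + a * v q ≠ 0 ∨ v q + a⁻¹ * v r ≠ 0
  · exact classOrbit_aainvLam_infinite ha ha1 rfl rfl rfl hpqr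
  push Not at hpqr
  obtain ⟨i, hik, hvi⟩ : ∃ i : Fin (k + 4 - 1), i.val < k ∧ v i ≠ 0 := by
    by_contra! hlow
    exact hv (exists_eq_smul_deltaVec_aainvLam ha ha1 rfl rfl rfl hlow hpqr.1 hpqr.2)
  exact classOrbit_aainvLam_infinite_of_apply_ne_zero (r := r) ha ha1 rfl rfl rfl hik hvi hpqr.1

end BraidAff
end
end

section
/- The group G₂₅ acts transitively on the set of its 12 reflection planes: for any two planes W₁, W₂ among the 2-dimensional subspaces of ℂ³ defined by the equations x = 0, y = 0, z = 0, and x + ξy + ξ′z = 0 (where ξ, ξ′ range over the cube roots of unity), there exists g ∈ G₂₅ with g·W₁ = W₂ (image subspace). -/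
/-!
A matrix `g` maps the plane `c ⬝ᵥ x = 0` onto the plane `(c ᵥ* g⁻¹) ⬝ᵥ x = 0`, so the action on
planes is right multiplication of their coefficient rows. The diagonal generators `R₁`, `R₃`
multiply the third, resp. second, coefficient by `ω²`, which generates the cube roots of unity;
hence they permute the nine planes `x + ξy + ξ′z = 0` transitively. The rows of `R₂` are
proportional to `(1, ω, ω)`, `(1, ω², 1)` and `(1, 1, ω²)`, so `R₂` links each coordinate plane
to one of those nine.
-/

noncomputable section

namespace Stmt12

/-- `ω = e^{2πi/3}`. -/
def ω : ℂ := Complex.exp (2 * Real.pi * Complex.I / 3)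

/-- The generators of the Shephard–Todd group `G₂₅`. -/
def R₁ : Matrix (Fin 3) (Fin 3) ℂ := Matrix.diagonal ![1, 1, ω ^ 2]
def R₂ : Matrix (Fin 3) (Fin 3) ℂ :=
  ((ω ^ 2 - ω) / 3) • !![ω, ω ^ 2, ω ^ 2; ω ^ 2, ω, ω ^ 2; ω ^ 2, ω ^ 2, ω]
def R₃ : Matrix (Fin 3) (Fin 3) ℂ := Matrix.diagonal ![1, ω ^ 2, 1]

/-- The Shephard–Todd group `G₂₅ ≤ GL₃(ℂ)` generated by `R₁, R₂, R₃`. -/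
def G25 : Subgroup (Matrix (Fin 3) (Fin 3) ℂ)ˣ :=
  Subgroup.closure {g | (g : Matrix (Fin 3) (Fin 3) ℂ) = R₁ ∨
    (g : Matrix (Fin 3) (Fin 3) ℂ) = R₂ ∨ (g : Matrix (Fin 3) (Fin 3) ℂ) = R₃}

/-- The plane of `ℂ³` with equation `c₀·x + c₁·y + c₂·z = 0`. -/
def plane (c : Fin 3 → ℂ) : Submodule ℂ (Fin 3 → ℂ) :=
  LinearMap.ker (∑ i, c i • (LinearMap.proj i : (Fin 3 → ℂ) →ₗ[ℂ] ℂ))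

/-- The 12 reflection planes of `G₂₅`: `x = 0`, `y = 0`, `z = 0` and
`x + ξy + ξ′z = 0` with `ξ, ξ′` cube roots of unity. -/
def ReflPlanes : Set (Submodule ℂ (Fin 3 → ℂ)) :=
  {W | W = plane ![1, 0, 0] ∨ W = plane ![0, 1, 0] ∨ W = plane ![0, 0, 1] ∨
    ∃ ξ ξ' : ℂ, ξ ^ 3 = 1 ∧ ξ' ^ 3 = 1 ∧ W = plane ![1, ξ, ξ']}

open Matrix

section SameOrbit

variable {n R : Type*} [Fintype n] [DecidableEq n] [CommRing R]

def SameOrbit (H : Subgroup (Matrix n n R)ˣ) (W₁ W₂ : Submodule R (n → R)) : Prop :=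
  ∃ g ∈ H, W₁.map (toLin' (g : Matrix n n R)) = W₂

variable {H : Subgroup (Matrix n n R)ˣ} {W₁ W₂ W₃ : Submodule R (n → R)}

theorem SameOrbit.refl (W : Submodule R (n → R)) : SameOrbit H W W :=
  ⟨1, H.one_mem, by rw [Units.val_one, toLin'_one, Submodule.map_id]⟩

theorem SameOrbit.symm (h : SameOrbit H W₁ W₂) : SameOrbit H W₂ W₁ := by
  obtain ⟨g, hg, rfl⟩ := h
  refine ⟨g⁻¹, H.inv_mem hg, ?_⟩
  rw [← Submodule.map_comp, ← toLin'_mul, ← Units.val_mul, inv_mul_cancel, Units.val_one,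
    toLin'_one, Submodule.map_id]

theorem SameOrbit.trans (h₁₂ : SameOrbit H W₁ W₂) (h₂₃ : SameOrbit H W₂ W₃) :
    SameOrbit H W₁ W₃ := by
  obtain ⟨g, hg, rfl⟩ := h₁₂
  obtain ⟨g', hg', rfl⟩ := h₂₃
  exact ⟨g' * g, H.mul_mem hg' hg, by rw [Units.val_mul, toLin'_mul, Submodule.map_comp]⟩

end SameOrbit

theorem mem_plane {c x : Fin 3 → ℂ} : x ∈ plane c ↔ c ⬝ᵥ x = 0 := by
  simp [plane, dotProduct, Fin.sum_univ_three]

theorem plane_smul {k : ℂ} (hk : k ≠ 0) (c : Fin 3 → ℂ) : plane (k • c) = plane c := by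
  ext x
  simp only [mem_plane, smul_dotProduct, smul_eq_mul, mul_eq_zero, hk, false_or]

theorem plane_vecMul (c : Fin 3 → ℂ) (A : Matrix (Fin 3) (Fin 3) ℂ) :
    plane (c ᵥ* A) = (plane c).comap (toLin' A) := by
  ext x
  rw [Submodule.mem_comap, mem_plane, mem_plane, toLin'_apply, dotProduct_mulVec]

theorem sameOrbit_plane_vecMul {H : Subgroup (Matrix (Fin 3) (Fin 3) ℂ)ˣ}
    {g : (Matrix (Fin 3) (Fin 3) ℂ)ˣ} (hg : g ∈ H) (c : Fin 3 → ℂ) :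
    SameOrbit H (plane (c ᵥ* (g : Matrix (Fin 3) (Fin 3) ℂ))) (plane c) :=
  ⟨g, hg, by
    rw [plane_vecMul, Submodule.map_comap_eq_of_surjective]
    exact mulVec_surjective_iff_isUnit.mpr g.isUnit⟩

theorem isPrimitiveRoot_ω : IsPrimitiveRoot ω 3 := by
  simpa [ω] using Complex.isPrimitiveRoot_exp 3 (by norm_num)

theorem ω_pow_three : ω ^ 3 = 1 := isPrimitiveRoot_ω.pow_eq_one

theorem ω_ne_zero : ω ≠ 0 := isPrimitiveRoot_ω.ne_zero (by norm_num)

theorem ω_sq_add_ω_add_one : ω ^ 2 + ω + 1 = 0 := by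
  have h := isPrimitiveRoot_ω.geom_sum_eq_zero (by norm_num)
  simp only [Finset.sum_range_succ, Finset.sum_range_zero, pow_zero, pow_one, zero_add] at h
  linear_combination h

theorem ω_sq_sub_ω_ne_zero : ω ^ 2 - ω ≠ 0 := by
  rw [sq, ← mul_sub_one]
  exact mul_ne_zero ω_ne_zero (sub_ne_zero.mpr (isPrimitiveRoot_ω.ne_one (by norm_num)))

theorem exists_eq_mul_ω_sq_pow {ξ η : ℂ} (hξ : ξ ^ 3 = 1) (hη : η ^ 3 = 1) :
    ∃ a : ℕ, η = ξ * (ω ^ 2) ^ a := by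
  have hξ0 : ξ ≠ 0 := by rintro rfl; norm_num at hξ
  obtain ⟨a, -, ha⟩ := (isPrimitiveRoot_ω.pow_of_coprime 2 (by norm_num)).eq_pow_of_pow_eq_one
    (show (η / ξ) ^ 3 = 1 by rw [div_pow, hξ, hη, div_one])
  exact ⟨a, by rw [ha, mul_div_cancel₀ _ hξ0]⟩

theorem det_R₁ : R₁.det = ω ^ 2 := by
  simp [R₁, Fin.prod_univ_three]

theorem det_R₃ : R₃.det = ω ^ 2 := by
  simp [R₃, Fin.prod_univ_three]

theorem det_R₂ : R₂.det = ω := by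
  have hω := ω_sq_add_ω_add_one
  rw [R₂, det_smul, det_fin_three]
  simp only [Fintype.card_fin, of_apply, cons_val', cons_val_zero, cons_val_fin_one, cons_val_one,
    cons_val]
  grind

theorem sameOrbit_plane_vecMul_generator {A : Matrix (Fin 3) (Fin 3) ℂ}
    (hA : A = R₁ ∨ A = R₂ ∨ A = R₃) (c : Fin 3 → ℂ) : SameOrbit G25 (plane (c ᵥ* A)) (plane c) := by
  have hdet : A.det ≠ 0 := by
    rcases hA with rfl | rfl | rfl <;> simp [det_R₁, det_R₂, det_R₃, ω_ne_zero]
  obtain ⟨g, rfl⟩ := (isUnit_iff_isUnit_det A).mpr (isUnit_iff_ne_zero.mpr hdet)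
  exact sameOrbit_plane_vecMul (Subgroup.subset_closure hA) c

theorem vecMul_R₁ (ξ ξ' : ℂ) : ![1, ξ, ξ'] ᵥ* R₁ = ![1, ξ, ξ' * ω ^ 2] := by
  ext i; fin_cases i <;> simp [R₁, vecMul_diagonal]

theorem vecMul_R₃ (ξ ξ' : ℂ) : ![1, ξ, ξ'] ᵥ* R₃ = ![1, ξ * ω ^ 2, ξ'] := by
  ext i; fin_cases i <;> simp [R₃, vecMul_diagonal]

theorem sameOrbit_plane_mul_ω_sq_left (ξ ξ' : ℂ) :
    SameOrbit G25 (plane ![1, ξ * ω ^ 2, ξ']) (plane ![1, ξ, ξ']) := by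
  rw [← vecMul_R₃]
  exact sameOrbit_plane_vecMul_generator (Or.inr (Or.inr rfl)) _

theorem sameOrbit_plane_mul_ω_sq_right (ξ ξ' : ℂ) :
    SameOrbit G25 (plane ![1, ξ, ξ' * ω ^ 2]) (plane ![1, ξ, ξ']) := by
  rw [← vecMul_R₁]
  exact sameOrbit_plane_vecMul_generator (Or.inl rfl) _

theorem sameOrbit_plane_mul_ω_sq_pow (ξ ξ' : ℂ) (a b : ℕ) :
    SameOrbit G25 (plane ![1, ξ * (ω ^ 2) ^ a, ξ' * (ω ^ 2) ^ b]) (plane ![1, ξ, ξ']) := by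
  induction a with
  | zero =>
    induction b with
    | zero => simpa only [pow_zero, mul_one] using SameOrbit.refl _
    | succ b ih =>
      rw [pow_zero, mul_one] at ih ⊢
      rw [pow_succ, ← mul_assoc]
      exact (sameOrbit_plane_mul_ω_sq_right _ _).trans ih
  | succ a ih =>
    rw [pow_succ, ← mul_assoc]
    exact (sameOrbit_plane_mul_ω_sq_left _ _).trans ih

theorem sameOrbit_plane_cube_roots {ξ ξ' η η' : ℂ} (hξ : ξ ^ 3 = 1) (hξ' : ξ' ^ 3 = 1)
    (hη : η ^ 3 = 1) (hη' : η' ^ 3 = 1) :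
    SameOrbit G25 (plane ![1, ξ, ξ']) (plane ![1, η, η']) := by
  obtain ⟨a, rfl⟩ := exists_eq_mul_ω_sq_pow hξ hη
  obtain ⟨b, rfl⟩ := exists_eq_mul_ω_sq_pow hξ' hη'
  exact (sameOrbit_plane_mul_ω_sq_pow ξ ξ' a b).symm

theorem sameOrbit_plane_of_vecMul_R₂ {c d : Fin 3 → ℂ} (m : ℕ)
    (h : c ᵥ* R₂ = ((ω ^ 2 - ω) / 3 * ω ^ m) • d) : SameOrbit G25 (plane d) (plane c) := by
  have hk : (ω ^ 2 - ω) / 3 * ω ^ m ≠ 0 :=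
    mul_ne_zero (div_ne_zero ω_sq_sub_ω_ne_zero three_ne_zero) (pow_ne_zero m ω_ne_zero)
  simpa [h, plane_smul hk] using sameOrbit_plane_vecMul_generator (Or.inr (Or.inl rfl)) c

theorem sameOrbit_plane_x_eq_zero : SameOrbit G25 (plane ![1, ω, ω]) (plane ![1, 0, 0]) :=
  sameOrbit_plane_of_vecMul_R₂ 1 (by ext i; fin_cases i <;> simp [R₂] <;> ring)

theorem sameOrbit_plane_y_eq_zero : SameOrbit G25 (plane ![1, ω ^ 2, 1]) (plane ![0, 1, 0]) :=
  sameOrbit_plane_of_vecMul_R₂ 2 (by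
    ext i
    fin_cases i <;> simp [R₂]
    linear_combination -((ω ^ 2 - ω) / 3 * ω) * ω_pow_three)

theorem sameOrbit_plane_z_eq_zero : SameOrbit G25 (plane ![1, 1, ω ^ 2]) (plane ![0, 0, 1]) :=
  sameOrbit_plane_of_vecMul_R₂ 2 (by
    ext i
    fin_cases i <;> simp [R₂]
    linear_combination -((ω ^ 2 - ω) / 3 * ω) * ω_pow_three)

theorem sameOrbit_plane_x_add_y_add_z_of_mem_reflPlanes {W : Submodule ℂ (Fin 3 → ℂ)}
    (hW : W ∈ ReflPlanes) :
    SameOrbit G25 (plane ![1, 1, 1]) W := by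
  have h1 : (1 : ℂ) ^ 3 = 1 := one_pow 3
  have hω : ω ^ 3 = 1 := ω_pow_three
  have hω2 : (ω ^ 2) ^ 3 = 1 := by rw [← pow_mul, mul_comm, pow_mul, ω_pow_three, one_pow]
  rcases hW with rfl | rfl | rfl | ⟨ξ, ξ', hξ, hξ', rfl⟩
  · exact (sameOrbit_plane_cube_roots h1 h1 hω hω).trans sameOrbit_plane_x_eq_zero
  · exact (sameOrbit_plane_cube_roots h1 h1 hω2 h1).trans sameOrbit_plane_y_eq_zero
  · exact (sameOrbit_plane_cube_roots h1 h1 h1 hω2).trans sameOrbit_plane_z_eq_zero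
  · exact sameOrbit_plane_cube_roots h1 h1 hξ hξ'

/-- Lemma 5.1 of the paper: `G₂₅` acts transitively on its 12 reflection planes. -/
theorem G25_transitive_on_reflection_planes :
    ∀ W₁ ∈ ReflPlanes, ∀ W₂ ∈ ReflPlanes, ∃ g ∈ G25,
      Submodule.map (Matrix.toLin' (g : Matrix (Fin 3) (Fin 3) ℂ)) W₁ = W₂ :=
  fun _ hW₁ _ hW₂ => (sameOrbit_plane_x_add_y_add_z_of_mem_reflPlanes hW₁).symm.trans
    (sameOrbit_plane_x_add_y_add_z_of_mem_reflPlanes hW₂)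

end Stmt12
end
end

section
/- Let α ∈ ℂ be a primitive 60th root of unity and set (λ₁, λ₂, λ₃, λ₄) = (α, α²⁹, α¹¹, α¹⁹). Let Â₃ = [[λ₁λ₂, 0], [λ₁(λ₃−1), 1]] and Â₁ = [[λ₂(λ₃−1)+1, λ₂(1−λ₂)], [1−λ₃, λ₂]] in GL₂(ℂ). Then the group of transformations of the projective line ℙ(ℂ²) induced by the subgroup ⟨Â₁, Â₃⟩ of GL₂(ℂ) is finite of cardinality 60 (it is the icosahedral group, isomorphic to the alternating group A₅). -/
/-!
The matrices `Â₃`, `Â₁` and `Â₁Â₃` have eigenvalues `{1, λ₁λ₂}`, `{1, λ₂λ₃}` and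
`{λ₂, λ₁λ₂λ₃}`. A `2 × 2` matrix with distinct eigenvalues `a ≠ b` satisfying `aⁿ = bⁿ` has
`n`-th power `aⁿ • 1`, so when the eigenvalue ratios `λ₁λ₂ = α³⁰`, `λ₂λ₃ = α⁴⁰`, `λ₁λ₃ = α¹²`
have orders `2, 3, 5` the images `u, v` of `Â₃, Â₁` in `PGL₂(ℂ)` satisfy
`u² = v³ = (vu)⁵ = 1`, with `u ≠ 1`. Hence `Γ` is a nontrivial quotient of the triangle group
`⟨x, y | x², y³, (yx)⁵⟩`. That group has at most `60` elements: coset enumeration over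
`⟨yx⟩` (the stabiliser of a vertex of the icosahedron) finds at most `12` cosets. It maps onto
`A₅`, since the images of `x`, `y`, `yx` have orders `2, 3, 5` and the simple group `A₅` has no
subgroup of index `2`. So it is isomorphic to `A₅`, and by simplicity `Γ` is as well.
-/

open Matrix Pointwise Subgroup

section Quadratic

variable {K A : Type*} [Field K] [Ring A] [Algebra K A]

theorem pow_mul_sub_smul_one {x : A} {c d : K} (hx : x ^ 2 = (c + d) • x - (c * d) • 1) (m : ℕ) :
    x ^ m * (x - d • 1) = c ^ m • (x - d • 1) := by
  have hc : x * (x - d • 1) = c • (x - d • 1) := by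
    rw [mul_sub, mul_smul_comm, mul_one, ← sq, hx]
    module
  induction m with
  | zero => simp
  | succ m ih => rw [pow_succ, mul_assoc, hc, mul_smul_comm, ih, smul_smul, pow_succ']

theorem pow_eq_smul_one_of_sq_eq {x : A} {a b : K} (hx : x ^ 2 = (a + b) • x - (a * b) • 1)
    (hab : a ≠ b) {n : ℕ} (hn : a ^ n = b ^ n) : x ^ n = a ^ n • 1 := by
  have hx' : x ^ 2 = (b + a) • x - (b * a) • 1 := by rw [hx]; module
  refine smul_right_injective A (sub_ne_zero.2 hab.symm) ?_
  calc (b - a) • x ^ n = x ^ n * ((x - a • 1) - (x - b • 1)) := by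
        rw [show (x - a • 1) - (x - b • 1) = (b - a) • (1 : A) by module, mul_smul_comm, mul_one]
    _ = b ^ n • (x - a • 1) - a ^ n • (x - b • 1) := by
        rw [mul_sub, pow_mul_sub_smul_one hx, pow_mul_sub_smul_one hx']
    _ = (b - a) • a ^ n • 1 := by rw [← hn]; module

theorem Matrix.sq_fin_two (M : Matrix (Fin 2) (Fin 2) K) : M ^ 2 = M.trace • M - M.det • 1 := by
  have := M.aeval_self_charpoly
  rw [charpoly_fin_two] at this
  simp only [map_add, map_sub, map_pow, Polynomial.aeval_X, Polynomial.aeval_C, map_mul,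
    Algebra.algebraMap_eq_smul_one] at this
  rw [smul_mul_assoc, one_mul] at this
  rw [← sub_eq_zero, ← this]
  abel

theorem Matrix.pow_eq_smul_one_of_trace_det {M : Matrix (Fin 2) (Fin 2) K} {a b : K} {n : ℕ}
    (htr : M.trace = a + b) (hdet : M.det = a * b) (hab : a ≠ b) (hn : a ^ n = b ^ n) :
    M ^ n = a ^ n • 1 :=
  pow_eq_smul_one_of_sq_eq (by rw [sq_fin_two, htr, hdet]) hab hn

end Quadratic

theorem smul_set_eq_of_closure_eq_top {G α : Type*} [Group G] [MulAction G α] {S : Set G}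
    (hS : closure S = ⊤) {C : Set α} (hC : C.Finite) (hSC : ∀ s ∈ S, s • C ⊆ C) (g : G) :
    g • C = C := by
  have : closure S ≤ MulAction.stabilizer G C := by
    refine (closure_le _).2 fun s hs => ?_
    exact Set.eq_of_subset_of_ncard_le (hSC s hs) (Set.ncard_smul_set s C).ge hC
  exact this (hS ▸ mem_top g)

theorem Subgroup.mem_of_forall_smul_mem {G : Type*} [Group G] {S : Set G}
    (hS : closure S = ⊤) {H : Subgroup G} (L : List (G ⧸ H)) (h₁ : ((1 : G) : G ⧸ H) ∈ L)
    (hSL : ∀ s ∈ S, ∀ c ∈ L, s • c ∈ L) (q : G ⧸ H) : q ∈ L := by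
  induction q using QuotientGroup.induction_on with | H g => ?_
  have hL := smul_set_eq_of_closure_eq_top hS (C := ({c | c ∈ L} : Set (G ⧸ H))) L.finite_toSet
    (fun s hs => Set.smul_set_subset_iff.2 fun c hc => hSL s hs c hc) g
  change (g : G ⧸ H) ∈ {c | c ∈ L}
  rw [← hL]
  simpa using Set.smul_mem_smul_set (a := g) (show _ ∈ {c | c ∈ L} from h₁)

theorem Subgroup.index_ne_two_of_isSimpleGroup {G : Type*} [Group G] [IsSimpleGroup G]
    (hG : Nat.card G ≠ 2) (H : Subgroup G) : H.index ≠ 2 := fun h => by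
  rcases IsSimpleGroup.eq_bot_or_eq_top_of_normal H (H.normal_of_index_eq_two h) with rfl | rfl
  · exact hG (by rwa [index_bot] at h)
  · simp at h

theorem Subgroup.eq_top_of_card_dvd_two_mul_card {G : Type*} [Group G] [IsSimpleGroup G]
    [Finite G] (hG : Nat.card G ≠ 2) {K : Subgroup G} (hK : Nat.card G ∣ 2 * Nat.card K) :
    K = ⊤ := by
  rw [← K.index_mul_card] at hK
  have := (Nat.dvd_prime Nat.prime_two).1 (Nat.dvd_of_mul_dvd_mul_right Nat.card_pos hK)
  exact index_eq_one.1 (this.resolve_right (K.index_ne_two_of_isSimpleGroup hG))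

theorem card_alternatingGroup_fin_five : Nat.card (alternatingGroup (Fin 5)) = 60 := by
  rw [nat_card_alternatingGroup, Nat.card_fin]
  rfl

def icosahedralRels : Set (FreeGroup (Fin 2)) :=
  {.of 0 ^ 2, .of 1 ^ 3, (.of 1 * .of 0) ^ 5}

abbrev IcosahedralGroup := PresentedGroup icosahedralRels

namespace IcosahedralGroup

def x : IcosahedralGroup := PresentedGroup.of 0

def y : IcosahedralGroup := PresentedGroup.of 1

theorem x_sq : x ^ 2 = 1 := PresentedGroup.one_of_mem (by simp [icosahedralRels])

theorem y_pow_three : y ^ 3 = 1 := PresentedGroup.one_of_mem (by simp [icosahedralRels])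

theorem y_mul_x_pow_five : (y * x) ^ 5 = 1 := PresentedGroup.one_of_mem (by simp [icosahedralRels])

theorem closure_x_y : closure {x, y} = ⊤ := by
  rw [← PresentedGroup.closure_range_of]
  congr 1
  ext g
  simp [Fin.exists_fin_two, x, y, eq_comm]

section Action

variable {α : Type*} [MulAction IcosahedralGroup α] (q : α)

theorem x_smul_x_smul : x • x • q = q := by rw [smul_smul, ← sq, x_sq, one_smul]

theorem y_smul_y_smul_y_smul : y • y • y • q = q := by
  rw [smul_smul, smul_smul, ← sq, ← pow_succ, y_pow_three, one_smul]

theorem y_smul_x_pow_five_smul : y • x • y • x • y • x • y • x • y • x • q = q := by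
  simpa only [pow_succ, pow_zero, one_mul, mul_smul, one_smul] using
    congrArg (· • q) y_mul_x_pow_five

theorem x_smul_y_pow_five_smul : x • y • x • y • x • y • x • y • x • y • q = q := by
  conv_lhs => rw [← x_smul_x_smul q, y_smul_x_pow_five_smul]
  exact x_smul_x_smul q

end Action

abbrev vertexStabilizer : Subgroup IcosahedralGroup := zpowers (y * x)

local notation "v₀" => ((1 : IcosahedralGroup) : IcosahedralGroup ⧸ vertexStabilizer)

theorem y_smul_x_smul_v₀ : y • x • v₀ = v₀ := by
  rw [smul_smul]
  exact QuotientGroup.mk_mul_of_mem 1 (mem_zpowers _) |>.trans (by simp)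

theorem y_smul_y_smul_v₀ : y • y • v₀ = x • v₀ := by
  conv_lhs => rw [← y_smul_x_smul_v₀]
  exact y_smul_y_smul_y_smul _

-- Subscripts are positions in `vertices`. These two entries of the coset table come from reading
-- a relator around a coset; every other entry follows from them, `x² = y³ = 1` and
-- `y • x • v₀ = v₀`.
theorem x_smul_vertex₆ : x • y • y • x • y • v₀ = y • x • y • x • y • v₀ := by
  rw [← y_smul_x_pow_five_smul (x • y • y • x • y • v₀)]
  simp only [x_smul_x_smul, y_smul_y_smul_y_smul, y_smul_y_smul_v₀]

theorem y_smul_vertex₁₀ :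
    y • y • x • y • y • x • y • x • y • v₀ = x • y • x • y • y • x • y • x • y • v₀ := by
  rw [← x_smul_y_pow_five_smul (y • y • x • y • y • x • y • x • y • v₀)]
  simp only [x_smul_x_smul, y_smul_y_smul_y_smul, x_smul_vertex₆]

theorem x_smul_vertex₇ : x • y • x • y • x • y • v₀ = y • y • x • y • v₀ := by
  rw [← x_smul_vertex₆, x_smul_x_smul]

theorem y_smul_vertex₁₁ :
    y • x • y • x • y • y • x • y • x • y • v₀ = x • y • y • x • y • x • y • v₀ := by
  rw [← y_smul_vertex₁₀, y_smul_y_smul_y_smul]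

def vertices : List (IcosahedralGroup ⧸ vertexStabilizer) :=
  [v₀, x • v₀, y • v₀, x • y • v₀, y • x • y • v₀, x • y • x • y • v₀, y • y • x • y • v₀,
    y • x • y • x • y • v₀, y • y • x • y • x • y • v₀, x • y • y • x • y • x • y • v₀,
    y • x • y • y • x • y • x • y • v₀, x • y • x • y • y • x • y • x • y • v₀]

-- Each `s • v` is rewritten by `simp only` to the normal word of some entry of `vertices`.
theorem smul_mem_vertices :
    ∀ s ∈ ({x, y} : Set IcosahedralGroup), ∀ v ∈ vertices, s • v ∈ vertices := by
  rintro s (rfl | rfl) v hv <;>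
  simp only [vertices, List.mem_cons, List.not_mem_nil, or_false] at hv <;>
  rcases hv with rfl | rfl | rfl | rfl | rfl | rfl | rfl | rfl | rfl | rfl | rfl | rfl <;>
  simp only [x_smul_x_smul, y_smul_y_smul_y_smul, y_smul_x_smul_v₀, y_smul_y_smul_v₀,
    x_smul_vertex₆, x_smul_vertex₇, y_smul_vertex₁₀, y_smul_vertex₁₁, vertices, List.mem_cons,
    true_or, or_true]

theorem vertices_get_surjective : Function.Surjective vertices.get := fun q =>
  List.mem_iff_get.1 <|
    mem_of_forall_smul_mem closure_x_y vertices (by simp [vertices]) smul_mem_vertices q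

instance : Finite (IcosahedralGroup ⧸ vertexStabilizer) :=
  Finite.of_surjective _ vertices_get_surjective

instance : Finite vertexStabilizer :=
  Nat.finite_of_card_ne_zero <| Nat.card_zpowers (y * x) ▸
    (isOfFinOrder_iff_pow_eq_one.2 ⟨5, by norm_num, y_mul_x_pow_five⟩).orderOf_pos.ne'

instance : Finite IcosahedralGroup :=
  (finite_iff_subgroup_quotient vertexStabilizer).2 ⟨inferInstance, inferInstance⟩

theorem card_le_sixty : Nat.card IcosahedralGroup ≤ 60 := by
  rw [card_eq_card_quotient_mul_card_subgroup vertexStabilizer, Nat.card_zpowers]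
  have hq : Nat.card (IcosahedralGroup ⧸ vertexStabilizer) ≤ 12 :=
    (Nat.card_le_card_of_surjective _ vertices_get_surjective).trans_eq (Nat.card_fin _)
  have hz : orderOf (y * x) ≤ 5 := orderOf_le_of_pow_eq_one (by norm_num) y_mul_x_pow_five
  exact Nat.mul_le_mul hq hz

section Lift

variable {Q : Type*} [Group Q] {u v : Q} (hu : u ^ 2 = 1) (hv : v ^ 3 = 1) (huv : (v * u) ^ 5 = 1)

def lift : IcosahedralGroup →* Q :=
  PresentedGroup.toGroup (f := ![u, v]) (by simp [icosahedralRels, hu, hv, huv])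

theorem lift_x : lift hu hv huv x = u := PresentedGroup.toGroup.of _

theorem lift_y : lift hu hv huv y = v := PresentedGroup.toGroup.of _

theorem range_lift : (lift hu hv huv).range = closure {u, v} := by
  rw [MonoidHom.range_eq_map, ← closure_x_y, MonoidHom.map_closure, Set.image_pair, lift_x, lift_y]

end Lift

def permX : alternatingGroup (Fin 5) :=
  ⟨Equiv.swap 0 3 * Equiv.swap 1 4, Equiv.Perm.mem_alternatingGroup.2 (by decide)⟩

def permY : alternatingGroup (Fin 5) :=
  ⟨Equiv.swap 0 1 * Equiv.swap 1 2, Equiv.Perm.mem_alternatingGroup.2 (by decide)⟩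

def toAlternatingGroup : IcosahedralGroup →* alternatingGroup (Fin 5) :=
  lift (u := permX) (v := permY) (by decide) (by decide) (by decide)

theorem toAlternatingGroup_surjective : Function.Surjective toAlternatingGroup := by
  rw [← MonoidHom.range_eq_top]
  set K := toAlternatingGroup.range
  have hdvd (g : IcosahedralGroup) : orderOf (toAlternatingGroup g) ∣ Nat.card K :=
    K.orderOf_dvd_natCard (MonoidHom.mem_range.2 ⟨g, rfl⟩)
  have h2 : 2 ∣ Nat.card K := by
    simpa [toAlternatingGroup, lift_x, orderOf_eq_prime (p := 2) (by decide : permX ^ 2 = 1)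
      (by decide)] using hdvd x
  have h3 : 3 ∣ Nat.card K := by
    simpa [toAlternatingGroup, lift_y, orderOf_eq_prime (p := 3) (by decide : permY ^ 3 = 1)
      (by decide)] using hdvd y
  have h5 : 5 ∣ Nat.card K := by
    simpa [toAlternatingGroup, lift_x, lift_y,
      orderOf_eq_prime (hp := ⟨by norm_num⟩) (by decide : (permY * permX) ^ 5 = 1) (by decide)]
      using hdvd (y * x)
  refine eq_top_of_card_dvd_two_mul_card (by rw [card_alternatingGroup_fin_five]; decide) ?_
  rw [card_alternatingGroup_fin_five, show 60 = 2 * (2 * 3 * 5) by rfl]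
  exact mul_dvd_mul_left 2 (Nat.Coprime.mul_dvd_of_dvd_of_dvd (by decide)
    (Nat.Coprime.mul_dvd_of_dvd_of_dvd (by decide) h2 h3) h5)

theorem card_eq_sixty : Nat.card IcosahedralGroup = 60 :=
  le_antisymm card_le_sixty <| card_alternatingGroup_fin_five ▸
    Nat.card_le_card_of_surjective _ toAlternatingGroup_surjective

noncomputable def mulEquivAlternatingGroup : IcosahedralGroup ≃* alternatingGroup (Fin 5) :=
  MulEquiv.ofBijective toAlternatingGroup <| (Nat.bijective_iff_surjective_and_card _).2
    ⟨toAlternatingGroup_surjective, by rw [card_eq_sixty, card_alternatingGroup_fin_five]⟩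

instance : IsSimpleGroup IcosahedralGroup := mulEquivAlternatingGroup.isSimpleGroup

theorem nonempty_closure_mulEquiv_alternatingGroup {Q : Type*} [Group Q] {u v : Q}
    (hu : u ^ 2 = 1) (hv : v ^ 3 = 1) (huv : (v * u) ^ 5 = 1) (hu₁ : u ≠ 1) :
    Nonempty (closure {u, v} ≃* alternatingGroup (Fin 5)) := by
  have hinj : Function.Injective (lift hu hv huv) := by
    rw [← MonoidHom.ker_eq_bot_iff]
    refine (IsSimpleGroup.eq_bot_or_eq_top_of_normal _ (lift hu hv huv).normal_ker).resolve_right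
      fun h => hu₁ ?_
    rw [← lift_x hu hv huv, ← MonoidHom.mem_ker, h]
    exact mem_top x
  exact ⟨(MulEquiv.subgroupCongr (range_lift hu hv huv)).symm.trans
    ((MonoidHom.ofInjective hinj).symm.trans mulEquivAlternatingGroup)⟩

end IcosahedralGroup

section BraidMatrices

variable {K : Type*} [Field K] {l₁ l₂ l₃ : K} {n : ℕ}

def braidMatrix₃ (l₁ l₂ l₃ : K) : Matrix (Fin 2) (Fin 2) K := !![l₁ * l₂, 0; l₁ * (l₃ - 1), 1]

def braidMatrix₁ (l₂ l₃ : K) : Matrix (Fin 2) (Fin 2) K :=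
  !![l₂ * (l₃ - 1) + 1, l₂ * (1 - l₂); 1 - l₃, l₂]

theorem braidMatrix₃_pow (h : l₁ * l₂ ≠ 1) (hn : (l₁ * l₂) ^ n = 1) :
    braidMatrix₃ l₁ l₂ l₃ ^ n = 1 := by
  simpa using Matrix.pow_eq_smul_one_of_trace_det (a := 1) (b := l₁ * l₂)
    (by simp [braidMatrix₃, trace_fin_two]; ring) (by simp [braidMatrix₃, det_fin_two]) h.symm
    (by rw [one_pow, hn])

theorem braidMatrix₁_pow (h : l₂ * l₃ ≠ 1) (hn : (l₂ * l₃) ^ n = 1) :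
    braidMatrix₁ l₂ l₃ ^ n = 1 := by
  simpa using Matrix.pow_eq_smul_one_of_trace_det (a := 1) (b := l₂ * l₃)
    (by simp [braidMatrix₁, trace_fin_two]; ring) (by simp [braidMatrix₁, det_fin_two]; ring)
    h.symm (by rw [one_pow, hn])

theorem braidMatrix₁_mul_braidMatrix₃_pow (h₂ : l₂ ≠ 0) (h : l₁ * l₃ ≠ 1)
    (hn : (l₁ * l₃) ^ n = 1) :
    (braidMatrix₁ l₂ l₃ * braidMatrix₃ l₁ l₂ l₃) ^ n = l₂ ^ n • 1 :=
  Matrix.pow_eq_smul_one_of_trace_det (b := l₂ * (l₁ * l₃))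
    (by simp [braidMatrix₁, braidMatrix₃, trace_fin_two]; ring)
    (by simp [braidMatrix₁, braidMatrix₃, det_fin_two]; ring)
    (fun e => h (by simpa [h₂] using e.symm)) (by rw [mul_pow, hn, mul_one])

theorem braidMatrix₃_not_mem_range_scalar (h : l₁ * l₂ ≠ 1) :
    braidMatrix₃ l₁ l₂ l₃ ∉ Set.range (scalar (Fin 2)) := by
  rintro ⟨c, hc⟩
  have h₀₀ := congrFun₂ hc 0 0
  have h₁₁ := congrFun₂ hc 1 1
  simp [braidMatrix₃] at h₀₀ h₁₁
  exact h (h₀₀.symm.trans h₁₁)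

theorem nonempty_map_closure_braidMatrix_mulEquiv {a₁ a₃ : GL (Fin 2) K}
    (ha₁ : a₁.val = braidMatrix₁ l₂ l₃) (ha₃ : a₃.val = braidMatrix₃ l₁ l₂ l₃)
    (h₁₂ : IsPrimitiveRoot (l₁ * l₂) 2) (h₂₃ : IsPrimitiveRoot (l₂ * l₃) 3)
    (h₁₃ : IsPrimitiveRoot (l₁ * l₃) 5) :
    Nonempty ((closure {a₁, a₃}).map (QuotientGroup.mk' (center (GL (Fin 2) K))) ≃*
      alternatingGroup (Fin 5)) := by
  set mk := QuotientGroup.mk' (center (GL (Fin 2) K))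
  have hmk (g : GL (Fin 2) K) : mk g = 1 ↔ g.val ∈ Set.range (scalar (Fin 2)) := by
    rw [QuotientGroup.mk'_apply, QuotientGroup.eq_one_iff,
      GeneralLinearGroup.mem_center_iff_val_mem_range_scalar]
  have hscalar (g : GL (Fin 2) K) (c : K) (hg : g.val = c • 1) : mk g = 1 :=
    (hmk g).2 ⟨c, by rw [hg, smul_one_eq_diagonal]; rfl⟩
  have hl₂ : l₂ ≠ 0 := left_ne_zero_of_mul (h₂₃.ne_zero (by norm_num))
  rw [MonoidHom.map_closure, Set.image_pair, Set.pair_comm]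
  refine IcosahedralGroup.nonempty_closure_mulEquiv_alternatingGroup ?_ ?_ ?_ ?_
  · rw [← map_pow]
    refine hscalar _ 1 ?_
    rw [Units.val_pow_eq_pow_val, ha₃, braidMatrix₃_pow (h₁₂.ne_one one_lt_two) h₁₂.pow_eq_one,
      one_smul]
  · rw [← map_pow]
    refine hscalar _ 1 ?_
    rw [Units.val_pow_eq_pow_val, ha₁, braidMatrix₁_pow (h₂₃.ne_one (by norm_num))
      h₂₃.pow_eq_one, one_smul]
  · rw [← map_mul, ← map_pow]
    refine hscalar _ (l₂ ^ 5) ?_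
    rw [Units.val_pow_eq_pow_val, Units.val_mul, ha₁, ha₃,
      braidMatrix₁_mul_braidMatrix₃_pow hl₂ (h₁₃.ne_one (by norm_num)) h₁₃.pow_eq_one]
  · rw [Ne, hmk, ha₃]
    exact braidMatrix₃_not_mem_range_scalar (h₁₂.ne_one one_lt_two)

end BraidMatrices

namespace Stmt19

theorem icosahedral_orbit_group_general (α : ℂ) (hα : orderOf α = 60)
    (l₁ l₂ l₃ : ℂ)
    (h₁ : l₁ = α) (h₂ : l₂ = α ^ 29) (h₃ : l₃ = α ^ 11)
    (Ahat₃ Ahat₁ : Matrix (Fin 2) (Fin 2) ℂ)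
    (hA₃ : Ahat₃ = !![l₁ * l₂, 0; l₁ * (l₃ - 1), 1])
    (hA₁ : Ahat₁ = !![l₂ * (l₃ - 1) + 1, l₂ * (1 - l₂); 1 - l₃, l₂]) :
    ∃ a₁ a₃ : (Matrix (Fin 2) (Fin 2) ℂ)ˣ,
      (a₁ : Matrix (Fin 2) (Fin 2) ℂ) = Ahat₁ ∧
      (a₃ : Matrix (Fin 2) (Fin 2) ℂ) = Ahat₃ ∧
      ∀ Γ : Subgroup ((Matrix (Fin 2) (Fin 2) ℂ)ˣ ⧸
          Subgroup.center (Matrix (Fin 2) (Fin 2) ℂ)ˣ),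
        Γ = Subgroup.map
              (QuotientGroup.mk' (Subgroup.center (Matrix (Fin 2) (Fin 2) ℂ)ˣ))
              (Subgroup.closure {a₁, a₃}) →
        Finite Γ ∧ Nat.card Γ = 60 ∧ Nonempty (Γ ≃* alternatingGroup (Fin 5)) := by
  subst l₁ l₂ l₃ Ahat₃ Ahat₁
  have hζ (k : ℕ) (hk : k ≠ 0) : IsPrimitiveRoot (α ^ k) (60 / Nat.gcd 60 k) :=
    hα ▸ orderOf_pow' α hk ▸ IsPrimitiveRoot.orderOf _
  have h₁₂ : IsPrimitiveRoot (α * α ^ 29) 2 := by simpa [← pow_succ'] using hζ 30 (by norm_num)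
  have h₂₃ : IsPrimitiveRoot (α ^ 29 * α ^ 11) 3 := by simpa [← pow_add] using hζ 40 (by norm_num)
  have h₁₃ : IsPrimitiveRoot (α * α ^ 11) 5 := by simpa [← pow_succ'] using hζ 12 (by norm_num)
  obtain ⟨a₁, ha₁⟩ :=
    IsUnit.of_pow_eq_one (braidMatrix₁_pow (h₂₃.ne_one (by norm_num)) h₂₃.pow_eq_one) three_ne_zero
  obtain ⟨a₃, ha₃⟩ := IsUnit.of_pow_eq_one
    (braidMatrix₃_pow (l₃ := α ^ 11) (h₁₂.ne_one one_lt_two) h₁₂.pow_eq_one) two_ne_zero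
  refine ⟨a₁, a₃, ha₁, ha₃, ?_⟩
  rintro Γ rfl
  obtain ⟨e⟩ := nonempty_map_closure_braidMatrix_mulEquiv ha₁ ha₃ h₁₂ h₂₃ h₁₃
  exact ⟨.of_equiv _ e.symm.toEquiv,
    by rw [Nat.card_congr e.toEquiv, card_alternatingGroup_fin_five], ⟨e⟩⟩

/-- The icosahedral case of Table 3 of the paper: for `α` a primitive 60th root of
unity and `(λ₁,λ₂,λ₃,λ₄) = (α,α²⁹,α¹¹,α¹⁹)`, the group of transformations of
`ℙ(ℂ²)` induced by the subgroup of `GL₂(ℂ)` generated by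
`Â₃ = [[λ₁λ₂,0],[λ₁(λ₃−1),1]]` and `Â₁ = [[λ₂(λ₃−1)+1, λ₂(1−λ₂)],[1−λ₃, λ₂]]`
(i.e. its image in `GL₂(ℂ)` modulo the scalars, which form the center) is finite of
cardinality 60, isomorphic to the alternating group `A₅`. -/
theorem icosahedral_orbit_group (α : ℂ) (hα : orderOf α = 60)
    (l₁ l₂ l₃ l₄ : ℂ)
    (h₁ : l₁ = α) (h₂ : l₂ = α ^ 29) (h₃ : l₃ = α ^ 11) (h₄ : l₄ = α ^ 19)
    (Ahat₃ Ahat₁ : Matrix (Fin 2) (Fin 2) ℂ)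
    (hA₃ : Ahat₃ = !![l₁ * l₂, 0; l₁ * (l₃ - 1), 1])
    (hA₁ : Ahat₁ = !![l₂ * (l₃ - 1) + 1, l₂ * (1 - l₂); 1 - l₃, l₂]) :
    ∃ a₁ a₃ : (Matrix (Fin 2) (Fin 2) ℂ)ˣ,
      (a₁ : Matrix (Fin 2) (Fin 2) ℂ) = Ahat₁ ∧
      (a₃ : Matrix (Fin 2) (Fin 2) ℂ) = Ahat₃ ∧
      ∀ Γ : Subgroup ((Matrix (Fin 2) (Fin 2) ℂ)ˣ ⧸
          Subgroup.center (Matrix (Fin 2) (Fin 2) ℂ)ˣ),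
        Γ = Subgroup.map
              (QuotientGroup.mk' (Subgroup.center (Matrix (Fin 2) (Fin 2) ℂ)ˣ))
              (Subgroup.closure {a₁, a₃}) →
        Finite Γ ∧ Nat.card Γ = 60 ∧ Nonempty (Γ ≃* alternatingGroup (Fin 5)) :=
  icosahedral_orbit_group_general α hα l₁ l₂ l₃ h₁ h₂ h₃ Ahat₃ Ahat₁ hA₃ hA₁

end Stmt19
end
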